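/- arXiv:1604.04163 — 11 statements merged into one kernel-verified Lean document; each statement's English description precedes it below -/
import Mathlib

section
/- Let (X,d) be a metric space and σ : X × X × [0,1] → X a conical geodesic bicombing, i.e., each σ(p,q,·) is a constant-speed geodesic from p to q and d(σ(p,q,t), σ(p',q',t)) ≤ (1−t)d(p,p') + t d(q,q') for all p,q,p',q' ∈ X and t ∈ [0,1]. Then every consistent geodesic bicombing (meaning im(σ(p',q',·)) ⊆ im(σ(p,q,·)) whenever p' = σ(p,q,s) and q' = σ(p,q,t) with 0 ≤ s ≤ t ≤ 1, and σ reparametrizes accordingly: σ(σ(p,q,s), σ(p,q,t), u) = σ(p,q,(1−u)s + ut)) is convex: for all p,q,p',q' the function t ↦ d(σ(p,q,t), σ(p',q',t)) is convex on [0,1]. -/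
/-- A consistent conical geodesic bicombing is convex. -/
theorem consistent_implies_convex
    {X : Type*} [MetricSpace X] (σ : X → X → ℝ → X)
    (h0 : ∀ p q, σ p q 0 = p)
    (h1 : ∀ p q, σ p q 1 = q)
    (hgeo : ∀ p q, ∀ s ∈ Set.Icc (0:ℝ) 1, ∀ t ∈ Set.Icc (0:ℝ) 1,
      dist (σ p q s) (σ p q t) = |s - t| * dist p q)
    (hcon : ∀ p q p' q', ∀ t ∈ Set.Icc (0:ℝ) 1,
      dist (σ p q t) (σ p' q' t) ≤ (1 - t) * dist p p' + t * dist q q')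
    (hcons : ∀ p q, ∀ s t u : ℝ, 0 ≤ s → s ≤ t → t ≤ 1 → u ∈ Set.Icc (0:ℝ) 1 →
      σ (σ p q s) (σ p q t) u = σ p q ((1 - u) * s + u * t)) :
    ∀ p q p' q', ConvexOn ℝ (Set.Icc (0:ℝ) 1)
      (fun t => dist (σ p q t) (σ p' q' t)) := by
  intro p q p' q'
  have key : ∀ x ∈ Set.Icc (0:ℝ) 1, ∀ y ∈ Set.Icc (0:ℝ) 1, ∀ a b : ℝ,
      0 ≤ a → 0 ≤ b → a + b = 1 → x ≤ y →
      dist (σ p q (a * x + b * y)) (σ p' q' (a * x + b * y)) ≤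
        a * dist (σ p q x) (σ p' q' x) + b * dist (σ p q y) (σ p' q' y) := by
    intro x hx y hy a b ha hb hab hxy
    have hb1 : b ≤ 1 := by linarith
    have ha' : a = 1 - b := by linarith
    have e1 : σ p q (a * x + b * y) = σ (σ p q x) (σ p q y) b := by
      rw [hcons p q x y b hx.1 hxy hy.2 ⟨hb, hb1⟩, ha']
    have e2 : σ p' q' (a * x + b * y) = σ (σ p' q' x) (σ p' q' y) b := by
      rw [hcons p' q' x y b hx.1 hxy hy.2 ⟨hb, hb1⟩, ha']
    rw [e1, e2, ha']
    exact hcon _ _ _ _ b ⟨hb, hb1⟩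
  constructor
  · exact convex_Icc 0 1
  · intro x hx y hy a b ha hb hab
    simp only [smul_eq_mul]
    rcases le_total x y with h | h
    · exact key x hx y hy a b ha hb hab h
    · have : a * x + b * y = b * y + a * x := by ring
      rw [this]
      have := key y hy x hx b a hb ha (by linarith) h
      linarith
end

section
/- Let (X,d) be a complete metric space admitting a conical geodesic bicombing σ. Define sequences by x₀ := x, y₀ := y, x_{n+1} := σ(x_n, y_n, 1/2), y_{n+1} := σ(y_n, x_n, 1/2). Then d(x_{n+1}, y_{n+1}) ≤ (1/2) d(x_n, y_n), and consequently d(x_n, y_n) ≤ 2^{−n} d(x,y) for all n ≥ 0. -/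
/-- The iterated midpoint sequences of a conical geodesic bicombing contract
at rate 1/2. -/
theorem midpoint_sequences_contract
    {X : Type*} [MetricSpace X] [CompleteSpace X] (σ : X → X → ℝ → X)
    (h0 : ∀ p q, σ p q 0 = p)
    (h1 : ∀ p q, σ p q 1 = q)
    (hgeo : ∀ p q, ∀ s ∈ Set.Icc (0:ℝ) 1, ∀ t ∈ Set.Icc (0:ℝ) 1,
      dist (σ p q s) (σ p q t) = |s - t| * dist p q)
    (hcon : ∀ p q p' q', ∀ t ∈ Set.Icc (0:ℝ) 1,
      dist (σ p q t) (σ p' q' t) ≤ (1 - t) * dist p p' + t * dist q q')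
    (x y : X) (xs ys : ℕ → X)
    (hx0 : xs 0 = x) (hy0 : ys 0 = y)
    (hxs : ∀ n, xs (n + 1) = σ (xs n) (ys n) (1/2))
    (hys : ∀ n, ys (n + 1) = σ (ys n) (xs n) (1/2)) :
    (∀ n, dist (xs (n + 1)) (ys (n + 1)) ≤ (1/2) * dist (xs n) (ys n)) ∧
    (∀ n, dist (xs n) (ys n) ≤ (1/2)^n * dist x y) := by
  have hhalf : (1/2 : ℝ) ∈ Set.Icc (0:ℝ) 1 := by norm_num
  have h0' : (0:ℝ) ∈ Set.Icc (0:ℝ) 1 := by norm_num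
  have h1' : (1:ℝ) ∈ Set.Icc (0:ℝ) 1 := by norm_num
  -- constant geodesics
  have hconst : ∀ z : X, σ z z (1/2) = z := by
    intro z
    have := hgeo z z (1/2) hhalf 0 h0'
    rw [h0, dist_self, mul_zero, dist_eq_zero] at this
    exact this
  have key : ∀ n, dist (xs (n + 1)) (ys (n + 1)) ≤ (1/2) * dist (xs n) (ys n) := by
    intro n
    set a := xs n
    set b := ys n
    have hz := hcon a b (σ b a (1/2)) (σ b a (1/2)) (1/2) hhalf
    rw [hconst (σ b a (1/2))] at hz
    have hd1 : dist a (σ b a (1/2)) = (1/2) * dist b a := by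
      have := hgeo b a 1 h1' (1/2) hhalf
      rw [h1] at this
      rw [this]; norm_num
    have hd2 : dist b (σ b a (1/2)) = (1/2) * dist b a := by
      have := hgeo b a 0 h0' (1/2) hhalf
      rw [h0] at this
      rw [this]; norm_num
    rw [hd1, hd2, dist_comm b a] at hz
    rw [hxs n, hys n]
    calc dist (σ a b (1/2)) (σ b a (1/2))
        ≤ (1 - 1/2) * ((1/2) * dist a b) + (1/2) * ((1/2) * dist a b) := hz
      _ = (1/2) * dist a b := by ring
  refine ⟨key, ?_⟩
  intro n
  induction n with
  | zero => simp [hx0, hy0]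
  | succ n ih =>
    calc dist (xs (n + 1)) (ys (n + 1)) ≤ (1/2) * dist (xs n) (ys n) := key n
      _ ≤ (1/2) * ((1/2)^n * dist x y) := by
          have : (0:ℝ) ≤ 1/2 := by norm_num
          nlinarith [ih]
      _ = (1/2)^(n+1) * dist x y := by ring
end

section
/- Let (X,d) be a complete metric space with a conical geodesic bicombing σ. Then there exists a map m : X × X → X such that for all x, y, x̄, ȳ ∈ X: (i) m(x,y) = m(y,x); (ii) d(x, m(x,y)) = d(y, m(x,y)) = (1/2) d(x,y); (iii) d(m(x,y), m(x̄,ȳ)) ≤ (1/2) d(x,x̄) + (1/2) d(y,ȳ). -/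
/-- The iterated midpoint sequence used to construct a symmetric midpoint map. -/
noncomputable def midSeq {X : Type*} (σ : X → X → ℝ → X) : ℕ → X → X → X
  | 0 => fun x y => σ x y (1/2)
  | n+1 => fun x y => σ (midSeq σ n x y) (midSeq σ n y x) (1/2)

/-- A complete metric space with a conical geodesic bicombing admits a
symmetric midpoint map. -/
theorem exists_midpoint_map
    {X : Type*} [MetricSpace X] [CompleteSpace X] (σ : X → X → ℝ → X)
    (h0 : ∀ p q, σ p q 0 = p)
    (h1 : ∀ p q, σ p q 1 = q)
    (hgeo : ∀ p q, ∀ s ∈ Set.Icc (0:ℝ) 1, ∀ t ∈ Set.Icc (0:ℝ) 1,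
      dist (σ p q s) (σ p q t) = |s - t| * dist p q)
    (hcon : ∀ p q p' q', ∀ t ∈ Set.Icc (0:ℝ) 1,
      dist (σ p q t) (σ p' q' t) ≤ (1 - t) * dist p p' + t * dist q q') :
    ∃ m : X → X → X,
      (∀ x y, m x y = m y x) ∧
      (∀ x y, dist x (m x y) = (1/2) * dist x y ∧
              dist y (m x y) = (1/2) * dist x y) ∧
      (∀ x y x' y', dist (m x y) (m x' y') ≤
        (1/2) * dist x x' + (1/2) * dist y y') := by
  have hmem : (1/2:ℝ) ∈ Set.Icc (0:ℝ) 1 := by constructor <;> norm_num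
  have h0mem : (0:ℝ) ∈ Set.Icc (0:ℝ) 1 := by constructor <;> norm_num
  have h1mem : (1:ℝ) ∈ Set.Icc (0:ℝ) 1 := by constructor <;> norm_num
  -- σ p p t = p
  have hconst : ∀ p : X, σ p p (1/2) = p := by
    intro p
    have := hgeo p p (1/2) hmem 0 h0mem
    rw [h0, dist_self] at this
    rw [mul_zero] at this
    exact dist_eq_zero.mp this
  -- distance to the left endpoint
  have hleft : ∀ p q : X, dist p (σ p q (1/2)) = (1/2) * dist p q := by
    intro p q
    have := hgeo p q 0 h0mem (1/2) hmem
    rw [h0] at this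
    rw [this]
    norm_num
  -- distance to the right endpoint
  have hright : ∀ p q : X, dist (σ p q (1/2)) q = (1/2) * dist p q := by
    intro p q
    have := hgeo p q (1/2) hmem 1 h1mem
    rw [h1] at this
    rw [this]
    norm_num
  -- the key contraction inequality
  have key : ∀ a b : X, dist (σ a b (1/2)) (σ b a (1/2)) ≤ (1/2) * dist a b := by
    intro a b
    set c := σ b a (1/2) with hc
    have hbc : dist b c = (1/2) * dist b a := hleft b a
    have hac : dist a c = (1/2) * dist b a := by
      have := hgeo b a 1 h1mem (1/2) hmem
      rw [h1] at this
      rw [this]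
      norm_num
    have t1 : dist (σ a b (1/2)) (σ a c (1/2)) ≤
        (1 - 1/2) * dist a a + (1/2) * dist b c := hcon a b a c (1/2) hmem
    rw [dist_self] at t1
    have t2 : dist (σ a c (1/2)) c = (1/2) * dist a c := hright a c
    have t3 : dist (σ a b (1/2)) c ≤
        dist (σ a b (1/2)) (σ a c (1/2)) + dist (σ a c (1/2)) c :=
      dist_triangle _ _ _
    have hba : dist b a = dist a b := dist_comm b a
    linarith
  -- asymmetry shrinks geometrically
  have hs : ∀ n : ℕ, ∀ x y : X,
      dist (midSeq σ n x y) (midSeq σ n y x) ≤ (1/2)^n * dist x y := by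
    intro n
    induction n with
    | zero =>
      intro x y
      show dist (σ x y (1/2)) (σ y x (1/2)) ≤ (1/2)^0 * dist x y
      rw [pow_zero, one_mul]
      have t1 : dist (σ x y (1/2)) (σ y x (1/2)) ≤
          dist (σ x y (1/2)) y + dist y (σ y x (1/2)) := dist_triangle _ _ _
      have t2 := hright x y
      have t3 := hleft y x
      have : dist y x = dist x y := dist_comm y x
      linarith
    | succ n ih =>
      intro x y
      show dist (σ (midSeq σ n x y) (midSeq σ n y x) (1/2))
        (σ (midSeq σ n y x) (midSeq σ n x y) (1/2)) ≤ (1/2)^(n+1) * dist x y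
      have t1 := key (midSeq σ n x y) (midSeq σ n y x)
      have t2 := ih x y
      have : ((1:ℝ)/2)^(n+1) * dist x y = (1/2) * ((1/2)^n * dist x y) := by ring
      rw [this]
      have hhalf : (0:ℝ) ≤ 1/2 := by norm_num
      calc dist (σ (midSeq σ n x y) (midSeq σ n y x) (1/2))
            (σ (midSeq σ n y x) (midSeq σ n x y) (1/2))
          ≤ (1/2) * dist (midSeq σ n x y) (midSeq σ n y x) := t1
        _ ≤ (1/2) * ((1/2)^n * dist x y) := by
            exact mul_le_mul_of_nonneg_left t2 hhalf
  -- consecutive terms are geometrically close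
  have hstep : ∀ x y : X, ∀ n : ℕ,
      dist (midSeq σ n x y) (midSeq σ (n+1) x y) ≤ dist x y * (1/2)^n := by
    intro x y n
    have : midSeq σ (n+1) x y = σ (midSeq σ n x y) (midSeq σ n y x) (1/2) := rfl
    rw [this]
    have t1 := hleft (midSeq σ n x y) (midSeq σ n y x)
    have t2 := hs n x y
    have hd : (0:ℝ) ≤ (1/2:ℝ)^n * dist x y - dist (midSeq σ n x y) (midSeq σ n y x) := by
      linarith
    calc dist (midSeq σ n x y) (σ (midSeq σ n x y) (midSeq σ n y x) (1/2))
        = (1/2) * dist (midSeq σ n x y) (midSeq σ n y x) := t1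
      _ ≤ (1/2) * ((1/2)^n * dist x y) := by linarith
      _ ≤ dist x y * (1/2)^n := by
          have : (1/2:ℝ) * ((1/2)^n * dist x y) ≤ 1 * ((1/2)^n * dist x y) := by
            have hx : (0:ℝ) ≤ (1/2:ℝ)^n * dist x y := by positivity
            nlinarith
          linarith [this]
  have hcauchy : ∀ x y : X, CauchySeq (fun n => midSeq σ n x y) := by
    intro x y
    exact cauchySeq_of_le_geometric (1/2) (dist x y) (by norm_num) (hstep x y)
  have hex : ∀ x y : X, ∃ p : X, Filter.Tendsto (fun n => midSeq σ n x y)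
      Filter.atTop (nhds p) := fun x y => cauchySeq_tendsto_of_complete (hcauchy x y)
  choose m hm using hex
  -- midpoint bounds along the sequence
  have hbnd : ∀ n : ℕ, ∀ x y : X,
      dist x (midSeq σ n x y) ≤ (1/2) * dist x y ∧
      dist y (midSeq σ n x y) ≤ (1/2) * dist x y := by
    intro n
    induction n with
    | zero =>
      intro x y
      exact ⟨le_of_eq (hleft x y), le_of_eq (by rw [dist_comm]; exact hright x y)⟩
    | succ n ih =>
      intro x y
      show dist x (σ (midSeq σ n x y) (midSeq σ n y x) (1/2)) ≤ (1/2) * dist x y ∧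
        dist y (σ (midSeq σ n x y) (midSeq σ n y x) (1/2)) ≤ (1/2) * dist x y
      constructor
      · have heq : dist x (σ (midSeq σ n x y) (midSeq σ n y x) (1/2)) =
            dist (σ x x (1/2)) (σ (midSeq σ n x y) (midSeq σ n y x) (1/2)) := by
          rw [hconst]
        rw [heq]
        have t1 := hcon x x (midSeq σ n x y) (midSeq σ n y x) (1/2) hmem
        have t2 := (ih x y).1
        have t3 := (ih y x).2
        have : dist y x = dist x y := dist_comm y x
        linarith
      · have heq : dist y (σ (midSeq σ n x y) (midSeq σ n y x) (1/2)) =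
            dist (σ y y (1/2)) (σ (midSeq σ n x y) (midSeq σ n y x) (1/2)) := by
          rw [hconst]
        rw [heq]
        have t1 := hcon y y (midSeq σ n x y) (midSeq σ n y x) (1/2) hmem
        have t2 := (ih x y).2
        have t3 := (ih y x).1
        have : dist y x = dist x y := dist_comm y x
        linarith
  -- Lipschitz bound along the sequence
  have hlip : ∀ n : ℕ, ∀ x y x' y' : X,
      dist (midSeq σ n x y) (midSeq σ n x' y') ≤
        (1/2) * dist x x' + (1/2) * dist y y' := by
    intro n
    induction n with
    | zero =>
      intro x y x' y'
      show dist (σ x y (1/2)) (σ x' y' (1/2)) ≤ (1/2) * dist x x' + (1/2) * dist y y'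
      have := hcon x y x' y' (1/2) hmem
      linarith
    | succ n ih =>
      intro x y x' y'
      show dist (σ (midSeq σ n x y) (midSeq σ n y x) (1/2))
        (σ (midSeq σ n x' y') (midSeq σ n y' x') (1/2)) ≤
        (1/2) * dist x x' + (1/2) * dist y y'
      have t1 := hcon (midSeq σ n x y) (midSeq σ n y x)
        (midSeq σ n x' y') (midSeq σ n y' x') (1/2) hmem
      have t2 := ih x y x' y'
      have t3 := ih y x y' x'
      linarith
  refine ⟨m, ?_, ?_, ?_⟩
  · -- symmetry
    intro x y
    have h2 : Filter.Tendsto (fun n => midSeq σ n y x) Filter.atTop (nhds (m x y)) := by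
      apply (hm x y).congr_dist
      apply squeeze_zero (fun n => dist_nonneg) (fun n => hs n x y)
      have : Filter.Tendsto (fun n : ℕ => (1/2:ℝ)^n * dist x y)
          Filter.atTop (nhds (0 * dist x y)) :=
        (tendsto_pow_atTop_nhds_zero_of_lt_one (by norm_num) (by norm_num)).mul_const _
      simpa using this
    exact tendsto_nhds_unique h2 (hm y x)
  · -- midpoint property
    intro x y
    have hx : dist x (m x y) ≤ (1/2) * dist x y := by
      have : Filter.Tendsto (fun n => dist x (midSeq σ n x y)) Filter.atTop
          (nhds (dist x (m x y))) := Filter.Tendsto.dist tendsto_const_nhds (hm x y)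
      exact le_of_tendsto this (Filter.Eventually.of_forall fun n => (hbnd n x y).1)
    have hy : dist y (m x y) ≤ (1/2) * dist x y := by
      have : Filter.Tendsto (fun n => dist y (midSeq σ n x y)) Filter.atTop
          (nhds (dist y (m x y))) := Filter.Tendsto.dist tendsto_const_nhds (hm x y)
      exact le_of_tendsto this (Filter.Eventually.of_forall fun n => (hbnd n x y).2)
    have htri : dist x y ≤ dist x (m x y) + dist y (m x y) := by
      have := dist_triangle x (m x y) y
      have h' : dist (m x y) y = dist y (m x y) := dist_comm _ _
      linarith
    constructor <;> linarith
  · -- the conical inequality for m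
    intro x y x' y'
    have : Filter.Tendsto (fun n => dist (midSeq σ n x y) (midSeq σ n x' y'))
        Filter.atTop (nhds (dist (m x y) (m x' y'))) :=
      Filter.Tendsto.dist (hm x y) (hm x' y')
    exact le_of_tendsto this (Filter.Eventually.of_forall fun n => hlip n x y x' y')
end

section
/- Let (X,d) be a complete metric space with a conical geodesic bicombing σ. Then X also admits a reversible conical geodesic bicombing, i.e., a conical geodesic bicombing τ satisfying τ(p,q,t) = τ(q,p,1−t) for all p,q ∈ X and t ∈ [0,1]. -/
open Filter Topology Set

namespace RevBicombing

variable {X : Type*} [MetricSpace X]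

/-- The symmetrization iteration: `F σ (n+1) p q t` is the `σ`-midpoint of
`F σ n p q t` and `F σ n q p (1-t)`. -/
noncomputable def F (σ : X → X → ℝ → X) : ℕ → X → X → ℝ → X
  | 0 => σ
  | n + 1 => fun p q t => σ (F σ n p q t) (F σ n q p (1 - t)) (1 / 2)

section

variable (σ : X → X → ℝ → X)
  (h0 : ∀ p q, σ p q 0 = p)
  (h1 : ∀ p q, σ p q 1 = q)
  (hgeo : ∀ p q, ∀ s ∈ Set.Icc (0:ℝ) 1, ∀ t ∈ Set.Icc (0:ℝ) 1,
      dist (σ p q s) (σ p q t) = |s - t| * dist p q)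
  (hcon : ∀ p q p' q', ∀ t ∈ Set.Icc (0:ℝ) 1,
      dist (σ p q t) (σ p' q' t) ≤ (1 - t) * dist p p' + t * dist q q')

lemma half_mem : (1/2 : ℝ) ∈ Set.Icc (0:ℝ) 1 := by norm_num

include h0 hgeo in
lemma self_eq : ∀ p : X, ∀ t ∈ Set.Icc (0:ℝ) 1, σ p p t = p := by
  intro p t ht
  have h := hgeo p p t ht 0 ⟨le_rfl, zero_le_one⟩
  rw [h0] at h
  simpa [dist_self] using h

include h0 h1 hgeo hcon in
lemma F_props : ∀ n : ℕ,
    (∀ p q, F σ n p q 0 = p) ∧ (∀ p q, F σ n p q 1 = q) ∧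
    (∀ p q : X, ∀ s ∈ Set.Icc (0:ℝ) 1, ∀ t ∈ Set.Icc (0:ℝ) 1,
      dist (F σ n p q s) (F σ n p q t) ≤ |s - t| * dist p q) ∧
    (∀ p q p' q' : X, ∀ t ∈ Set.Icc (0:ℝ) 1,
      dist (F σ n p q t) (F σ n p' q' t) ≤ (1 - t) * dist p p' + t * dist q q') := by
  intro n
  induction n with
  | zero => exact ⟨h0, h1, fun p q s hs t ht => le_of_eq (hgeo p q s hs t ht), hcon⟩
  | succ n ih =>
    obtain ⟨i0, i1, igeo, icon⟩ := ih
    refine ⟨?_, ?_, ?_, ?_⟩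
    · intro p q
      show σ (F σ n p q 0) (F σ n q p (1 - 0)) (1/2) = p
      rw [i0, show (1:ℝ) - 0 = 1 by ring, i1]
      exact self_eq σ h0 hgeo p _ half_mem
    · intro p q
      show σ (F σ n p q 1) (F σ n q p (1 - 1)) (1/2) = q
      rw [i1, show (1:ℝ) - 1 = 0 by ring, i0]
      exact self_eq σ h0 hgeo q _ half_mem
    · intro p q s hs t ht
      have h1s : (1 - s) ∈ Set.Icc (0:ℝ) 1 := ⟨by linarith [hs.2], by linarith [hs.1]⟩
      have h1t : (1 - t) ∈ Set.Icc (0:ℝ) 1 := ⟨by linarith [ht.2], by linarith [ht.1]⟩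
      calc dist (F σ (n+1) p q s) (F σ (n+1) p q t)
          ≤ (1 - 1/2) * dist (F σ n p q s) (F σ n p q t)
            + (1/2) * dist (F σ n q p (1 - s)) (F σ n q p (1 - t)) :=
            hcon _ _ _ _ _ half_mem
        _ ≤ (1 - 1/2) * (|s - t| * dist p q) + (1/2) * (|1 - s - (1 - t)| * dist q p) := by
            gcongr
            · exact igeo p q s hs t ht
            · exact igeo q p _ h1s _ h1t
        _ = |s - t| * dist p q := by
            rw [dist_comm q p, show |1 - s - (1 - t)| = |s - t| by
              rw [show (1:ℝ) - s - (1 - t) = -(s - t) by ring, abs_neg]]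
            ring
    · intro p q p' q' t ht
      have h1t : (1 - t) ∈ Set.Icc (0:ℝ) 1 := ⟨by linarith [ht.2], by linarith [ht.1]⟩
      calc dist (F σ (n+1) p q t) (F σ (n+1) p' q' t)
          ≤ (1 - 1/2) * dist (F σ n p q t) (F σ n p' q' t)
            + (1/2) * dist (F σ n q p (1 - t)) (F σ n q' p' (1 - t)) :=
            hcon _ _ _ _ _ half_mem
        _ ≤ (1 - 1/2) * ((1 - t) * dist p p' + t * dist q q')
            + (1/2) * ((1 - (1 - t)) * dist q q' + (1 - t) * dist p p') := by
            gcongr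
            · exact icon p q p' q' t ht
            · exact icon q p q' p' _ h1t
        _ = (1 - t) * dist p p' + t * dist q q' := by ring

include h0 h1 hgeo hcon in
lemma F_asym : ∀ n : ℕ, ∀ p q : X, ∀ t ∈ Set.Icc (0:ℝ) 1,
    dist (F σ n p q t) (F σ n q p (1 - t)) ≤ (1/2)^n * (2 * dist p q) := by
  intro n
  induction n with
  | zero =>
    intro p q t ht
    have e1 : dist (σ p q t) p = t * dist p q := by
      have h := hgeo p q t ht 0 ⟨le_rfl, zero_le_one⟩
      rw [h0, show |t - 0| = t by rw [sub_zero, abs_of_nonneg ht.1]] at h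
      exact h
    have e2 : dist p (σ q p (1 - t)) = t * dist p q := by
      have h := hgeo q p 1 ⟨zero_le_one, le_rfl⟩ (1 - t)
        ⟨by linarith [ht.2], by linarith [ht.1]⟩
      rw [h1, show |1 - (1 - t)| = t by
        rw [show (1:ℝ) - (1 - t) = t by ring, abs_of_nonneg ht.1], dist_comm q p] at h
      exact h
    have hd : (0:ℝ) ≤ dist p q := dist_nonneg
    calc dist (σ p q t) (σ q p (1 - t))
        ≤ dist (σ p q t) p + dist p (σ q p (1 - t)) := dist_triangle _ _ _
      _ = 2 * t * dist p q := by rw [e1, e2]; ring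
      _ ≤ (1/2)^0 * (2 * dist p q) := by
          simp only [pow_zero, one_mul]
          nlinarith [ht.1, ht.2]
  | succ n ih =>
    intro p q t ht
    have h1t : (1 - t) ∈ Set.Icc (0:ℝ) 1 := ⟨by linarith [ht.2], by linarith [ht.1]⟩
    set x := F σ n p q t with hx
    set y := F σ n q p (1 - t) with hy
    have hxy : dist x y ≤ (1/2)^n * (2 * dist p q) := ih p q t ht
    have hym : dist y (σ y x (1/2)) = (1/2) * dist y x := by
      have h := hgeo y x 0 ⟨le_rfl, zero_le_one⟩ (1/2) half_mem
      rw [h0] at h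
      rw [h]
      norm_num
    have hxm : dist x (σ y x (1/2)) = (1/2) * dist y x := by
      have h := hgeo y x 1 ⟨zero_le_one, le_rfl⟩ (1/2) half_mem
      rw [h1] at h
      rw [h]
      norm_num
    have hmm : σ (σ y x (1/2)) (σ y x (1/2)) (1/2) = σ y x (1/2) :=
      self_eq σ h0 hgeo _ _ half_mem
    have key : dist (σ x y (1/2)) (σ y x (1/2)) ≤ (1/2) * dist x y := by
      calc dist (σ x y (1/2)) (σ y x (1/2))
          = dist (σ x y (1/2)) (σ (σ y x (1/2)) (σ y x (1/2)) (1/2)) := by rw [hmm]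
        _ ≤ (1 - 1/2) * dist x (σ y x (1/2)) + (1/2) * dist y (σ y x (1/2)) :=
            hcon _ _ _ _ _ half_mem
        _ = (1/2) * dist x y := by rw [hxm, hym, dist_comm y x]; ring
    have hrw : F σ n p q (1 - (1 - t)) = x := by
      rw [show (1:ℝ) - (1 - t) = t by ring]
    calc dist (F σ (n+1) p q t) (F σ (n+1) q p (1 - t))
        = dist (σ x y (1/2)) (σ y x (1/2)) := by
          show dist (σ x y (1/2)) (σ y (F σ n p q (1 - (1 - t))) (1/2)) = _
          rw [hrw]
      _ ≤ (1/2) * dist x y := key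
      _ ≤ (1/2) * ((1/2)^n * (2 * dist p q)) := by linarith [hxy]
      _ = (1/2)^(n+1) * (2 * dist p q) := by ring

include h0 h1 hgeo hcon in
lemma F_succ_dist : ∀ n : ℕ, ∀ p q : X, ∀ t ∈ Set.Icc (0:ℝ) 1,
    dist (F σ n p q t) (F σ (n+1) p q t) ≤ dist p q * (1/2)^n := by
  intro n p q t ht
  have hxy := F_asym σ h0 h1 hgeo hcon n p q t ht
  have e : dist (F σ n p q t) (F σ (n+1) p q t)
      = (1/2) * dist (F σ n p q t) (F σ n q p (1 - t)) := by
    have h := hgeo (F σ n p q t) (F σ n q p (1 - t)) 0 ⟨le_rfl, zero_le_one⟩ (1/2) half_mem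
    rw [h0] at h
    calc dist (F σ n p q t) (F σ (n+1) p q t)
        = dist (F σ n p q t) (σ (F σ n p q t) (F σ n q p (1 - t)) (1/2)) := rfl
      _ = (1/2) * dist (F σ n p q t) (F σ n q p (1 - t)) := by
          rw [h]; norm_num
  rw [e]
  nlinarith [hxy]

end

end RevBicombing

/-- A complete metric space with a conical geodesic bicombing admits a
reversible conical geodesic bicombing. -/
theorem exists_reversible_conical_bicombing
    {X : Type*} [MetricSpace X] [CompleteSpace X] (σ : X → X → ℝ → X)
    (h0 : ∀ p q, σ p q 0 = p)
    (h1 : ∀ p q, σ p q 1 = q)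
    (hgeo : ∀ p q, ∀ s ∈ Set.Icc (0:ℝ) 1, ∀ t ∈ Set.Icc (0:ℝ) 1,
      dist (σ p q s) (σ p q t) = |s - t| * dist p q)
    (hcon : ∀ p q p' q', ∀ t ∈ Set.Icc (0:ℝ) 1,
      dist (σ p q t) (σ p' q' t) ≤ (1 - t) * dist p p' + t * dist q q') :
    ∃ τ : X → X → ℝ → X,
      (∀ p q, τ p q 0 = p) ∧
      (∀ p q, τ p q 1 = q) ∧
      (∀ p q, ∀ s ∈ Set.Icc (0:ℝ) 1, ∀ t ∈ Set.Icc (0:ℝ) 1,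
        dist (τ p q s) (τ p q t) = |s - t| * dist p q) ∧
      (∀ p q p' q', ∀ t ∈ Set.Icc (0:ℝ) 1,
        dist (τ p q t) (τ p' q' t) ≤ (1 - t) * dist p p' + t * dist q q') ∧
      (∀ p q, ∀ t ∈ Set.Icc (0:ℝ) 1, τ p q t = τ q p (1 - t)) := by
  classical
  open RevBicombing Filter Topology in
  rcases isEmpty_or_nonempty X with hE | hN
  · refine ⟨fun p _ _ => p, ?_, ?_, ?_, ?_, ?_⟩ <;> intro p <;> exact isEmptyElim p
  · -- clamp parameters to [0,1]
    set c : ℝ → ℝ := fun t => max 0 (min 1 t) with hc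
    have hcmem : ∀ t, c t ∈ Set.Icc (0:ℝ) 1 :=
      fun t => ⟨le_max_left _ _, max_le zero_le_one (min_le_left _ _)⟩
    have hceq : ∀ t ∈ Set.Icc (0:ℝ) 1, c t = t := by
      intro t ht
      simp only [hc]
      rw [min_eq_right ht.2, max_eq_right ht.1]
    have hP := RevBicombing.F_props σ h0 h1 hgeo hcon
    have hcauchy : ∀ (p q : X) (t : ℝ), CauchySeq (fun n => RevBicombing.F σ n p q (c t)) :=
      fun p q t => cauchySeq_of_le_geometric (1/2) (dist p q) (by norm_num)
        (fun n => RevBicombing.F_succ_dist σ h0 h1 hgeo hcon n p q (c t) (hcmem t))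
    let τ : X → X → ℝ → X :=
      fun p q t => limUnder atTop (fun n => RevBicombing.F σ n p q (c t))
    have htend : ∀ (p q : X) (t : ℝ),
        Tendsto (fun n => RevBicombing.F σ n p q (c t)) atTop (𝓝 (τ p q t)) :=
      fun p q t => (hcauchy p q t).tendsto_limUnder
    have hτ0 : ∀ p q : X, τ p q 0 = p := by
      intro p q
      have h00 : c 0 = 0 := hceq 0 ⟨le_rfl, zero_le_one⟩
      have hconst : Tendsto (fun n => RevBicombing.F σ n p q (c 0)) atTop (𝓝 p) := by
        have he : (fun n : ℕ => RevBicombing.F σ n p q (c 0)) = fun _ => p :=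
          funext fun n => by rw [h00]; exact (hP n).1 p q
        rw [he]; exact tendsto_const_nhds
      exact tendsto_nhds_unique (htend p q 0) hconst
    have hτ1 : ∀ p q : X, τ p q 1 = q := by
      intro p q
      have h11 : c 1 = 1 := hceq 1 ⟨zero_le_one, le_rfl⟩
      have hconst : Tendsto (fun n => RevBicombing.F σ n p q (c 1)) atTop (𝓝 q) := by
        have he : (fun n : ℕ => RevBicombing.F σ n p q (c 1)) = fun _ => q :=
          funext fun n => by rw [h11]; exact (hP n).2.1 p q
        rw [he]; exact tendsto_const_nhds
      exact tendsto_nhds_unique (htend p q 1) hconst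
    have hτgeo_le : ∀ p q : X, ∀ u ∈ Set.Icc (0:ℝ) 1, ∀ v ∈ Set.Icc (0:ℝ) 1,
        dist (τ p q u) (τ p q v) ≤ |u - v| * dist p q := by
      intro p q u hu v hv
      refine le_of_tendsto' ((htend p q u).dist (htend p q v)) (fun n => ?_)
      rw [hceq u hu, hceq v hv]
      exact (hP n).2.2.1 p q u hu v hv
    have hτcon : ∀ p q p' q' : X, ∀ t ∈ Set.Icc (0:ℝ) 1,
        dist (τ p q t) (τ p' q' t) ≤ (1 - t) * dist p p' + t * dist q q' := by
      intro p q p' q' t ht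
      refine le_of_tendsto' ((htend p q t).dist (htend p' q' t)) (fun n => ?_)
      rw [hceq t ht]
      exact (hP n).2.2.2 p q p' q' t ht
    have hτgeo : ∀ p q : X, ∀ s ∈ Set.Icc (0:ℝ) 1, ∀ t ∈ Set.Icc (0:ℝ) 1,
        dist (τ p q s) (τ p q t) = |s - t| * dist p q := by
      intro p q s hs t ht
      have main : ∀ s ∈ Set.Icc (0:ℝ) 1, ∀ t ∈ Set.Icc (0:ℝ) 1, s ≤ t →
          dist (τ p q s) (τ p q t) = |s - t| * dist p q := by
        intro s hs t ht hst
        have hA : dist p (τ p q s) ≤ s * dist p q := by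
          have h := hτgeo_le p q 0 ⟨le_rfl, zero_le_one⟩ s hs
          rwa [hτ0 p q, show |0 - s| = s from by
            rw [zero_sub, abs_neg, abs_of_nonneg hs.1]] at h
        have hC : dist (τ p q t) q ≤ (1 - t) * dist p q := by
          have h := hτgeo_le p q t ht 1 ⟨zero_le_one, le_rfl⟩
          rwa [hτ1 p q, show |t - 1| = 1 - t from by
            rw [abs_sub_comm, abs_of_nonneg (by linarith [ht.2])]] at h
        have hB := hτgeo_le p q s hs t ht
        have htri : dist p q ≤ dist p (τ p q s) + dist (τ p q s) (τ p q t) + dist (τ p q t) q :=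
          dist_triangle4 _ _ _ _
        have habs : |s - t| = t - s := by
          rw [abs_sub_comm, abs_of_nonneg (by linarith)]
        rw [habs] at hB ⊢
        exact le_antisymm hB (by nlinarith [hA, hC, htri])
      rcases le_total s t with h | h
      · exact main s hs t ht h
      · rw [dist_comm, abs_sub_comm]
        exact main t ht s hs h
    have hτrev : ∀ p q : X, ∀ t ∈ Set.Icc (0:ℝ) 1, τ p q t = τ q p (1 - t) := by
      intro p q t ht
      have h1t : (1 - t) ∈ Set.Icc (0:ℝ) 1 := ⟨by linarith [ht.2], by linarith [ht.1]⟩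
      have hT := (htend p q t).dist (htend q p (1 - t))
      have hb : ∀ n, dist (RevBicombing.F σ n p q (c t)) (RevBicombing.F σ n q p (c (1 - t)))
          ≤ (1/2)^n * (2 * dist p q) := by
        intro n
        have h := RevBicombing.F_asym σ h0 h1 hgeo hcon n p q t ht
        calc dist (RevBicombing.F σ n p q (c t)) (RevBicombing.F σ n q p (c (1 - t)))
            = dist (RevBicombing.F σ n p q t) (RevBicombing.F σ n q p (1 - t)) := by
              rw [hceq t ht, hceq (1 - t) h1t]
          _ ≤ (1/2)^n * (2 * dist p q) := h
      have hzero : Tendsto (fun n => (1/2:ℝ)^n * (2 * dist p q)) atTop (𝓝 0) := by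
        have h := tendsto_pow_atTop_nhds_zero_of_lt_one
          (by norm_num : (0:ℝ) ≤ 1/2) (by norm_num : (1/2:ℝ) < 1)
        simpa using h.mul_const (2 * dist p q)
      have hle0 : dist (τ p q t) (τ q p (1 - t)) ≤ 0 :=
        le_of_tendsto_of_tendsto' hT hzero hb
      exact eq_of_dist_eq_zero (le_antisymm hle0 dist_nonneg)
    exact ⟨τ, hτ0, hτ1, hτgeo, hτcon, hτrev⟩
end

section
/- Let (X,d) be a complete metric space with a conical geodesic bicombing σ and let m : X × X → X be a symmetric midpoint map satisfying d(m(x,y), m(x̄,ȳ)) ≤ (1/2)d(x,x̄) + (1/2)d(y,ȳ) and d(x,m(x,y)) = d(y,m(x,y)) = (1/2)d(x,y). Define τ(x,y,t) := m(σ(x,y,t), σ(y,x,1−t)). Then τ is a reversible conical geodesic bicombing on X. -/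
/-- Symmetrizing a conical geodesic bicombing with a midpoint map yields a
reversible conical geodesic bicombing. -/
theorem symmetrized_bicombing_reversible_conical
    {X : Type*} [MetricSpace X] [CompleteSpace X] (σ : X → X → ℝ → X)
    (h0 : ∀ p q, σ p q 0 = p)
    (h1 : ∀ p q, σ p q 1 = q)
    (hgeo : ∀ p q, ∀ s ∈ Set.Icc (0:ℝ) 1, ∀ t ∈ Set.Icc (0:ℝ) 1,
      dist (σ p q s) (σ p q t) = |s - t| * dist p q)
    (hcon : ∀ p q p' q', ∀ t ∈ Set.Icc (0:ℝ) 1,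
      dist (σ p q t) (σ p' q' t) ≤ (1 - t) * dist p p' + t * dist q q')
    (m : X → X → X)
    (hsymm : ∀ x y, m x y = m y x)
    (hmid : ∀ x y, dist x (m x y) = (1/2) * dist x y ∧
                   dist y (m x y) = (1/2) * dist x y)
    (hlip : ∀ x y x' y', dist (m x y) (m x' y') ≤
      (1/2) * dist x x' + (1/2) * dist y y')
    (τ : X → X → ℝ → X)
    (hτ : ∀ x y t, τ x y t = m (σ x y t) (σ y x (1 - t))) :
    (∀ p q, τ p q 0 = p) ∧
    (∀ p q, τ p q 1 = q) ∧
    (∀ p q, ∀ s ∈ Set.Icc (0:ℝ) 1, ∀ t ∈ Set.Icc (0:ℝ) 1,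
      dist (τ p q s) (τ p q t) = |s - t| * dist p q) ∧
    (∀ p q p' q', ∀ t ∈ Set.Icc (0:ℝ) 1,
      dist (τ p q t) (τ p' q' t) ≤ (1 - t) * dist p p' + t * dist q q') ∧
    (∀ p q, ∀ t ∈ Set.Icc (0:ℝ) 1, τ p q t = τ q p (1 - t)) := by
  have mxx : ∀ x : X, m x x = x := by
    intro x
    have h := (hmid x x).1
    simp at h
    exact h.symm
  have hτ0 : ∀ p q, τ p q 0 = p := by
    intro p q
    rw [hτ]
    norm_num [h0, h1, mxx]
  have hτ1 : ∀ p q, τ p q 1 = q := by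
    intro p q
    rw [hτ]
    norm_num [h0, h1, mxx]
  -- upper bound for the geodesic property
  have ub : ∀ p q, ∀ s ∈ Set.Icc (0:ℝ) 1, ∀ t ∈ Set.Icc (0:ℝ) 1,
      dist (τ p q s) (τ p q t) ≤ |s - t| * dist p q := by
    intro p q s hs t ht
    rw [hτ, hτ]
    have := hlip (σ p q s) (σ q p (1 - s)) (σ p q t) (σ q p (1 - t))
    have e1 := hgeo p q s hs t ht
    have hs' : (1:ℝ) - s ∈ Set.Icc (0:ℝ) 1 := ⟨by linarith [hs.2], by linarith [hs.1]⟩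
    have ht' : (1:ℝ) - t ∈ Set.Icc (0:ℝ) 1 := ⟨by linarith [ht.2], by linarith [ht.1]⟩
    have e2 := hgeo q p (1 - s) hs' (1 - t) ht'
    have habs : |1 - s - (1 - t)| = |s - t| := by
      rw [show (1:ℝ) - s - (1 - t) = -(s - t) by ring, abs_neg]
    rw [e1, e2, habs, dist_comm q p] at this
    linarith
  refine ⟨hτ0, hτ1, ?_, ?_, ?_⟩
  · intro p q s hs t ht
    refine le_antisymm (ub p q s hs t ht) ?_
    have h01 : (0:ℝ) ∈ Set.Icc (0:ℝ) 1 := by constructor <;> norm_num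
    have h11 : (1:ℝ) ∈ Set.Icc (0:ℝ) 1 := by constructor <;> norm_num
    rcases le_total s t with hst | hst
    · have l1 : dist p (τ p q s) ≤ s * dist p q := by
        have := ub p q 0 h01 s hs
        rw [hτ0] at this
        rwa [show |0 - s| = s by rw [zero_sub, abs_neg]; exact abs_of_nonneg hs.1] at this
      have l2 : dist (τ p q t) q ≤ (1 - t) * dist p q := by
        have := ub p q t ht 1 h11
        rw [hτ1] at this
        rwa [show |t - 1| = 1 - t by rw [abs_sub_comm]; exact abs_of_nonneg (by linarith [ht.2])]
          at this
      have tri : dist p q ≤ dist p (τ p q s) + dist (τ p q s) (τ p q t) + dist (τ p q t) q :=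
        dist_triangle4 _ _ _ _
      rw [show |s - t| = t - s by rw [abs_sub_comm]; exact abs_of_nonneg (by linarith)]
      linarith
    · have l1 : dist p (τ p q t) ≤ t * dist p q := by
        have := ub p q 0 h01 t ht
        rw [hτ0] at this
        rwa [show |0 - t| = t by rw [zero_sub, abs_neg]; exact abs_of_nonneg ht.1] at this
      have l2 : dist (τ p q s) q ≤ (1 - s) * dist p q := by
        have := ub p q s hs 1 h11
        rw [hτ1] at this
        rwa [show |s - 1| = 1 - s by rw [abs_sub_comm]; exact abs_of_nonneg (by linarith [hs.2])]
          at this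
      have tri : dist p q ≤ dist p (τ p q t) + dist (τ p q t) (τ p q s) + dist (τ p q s) q :=
        dist_triangle4 _ _ _ _
      rw [show |s - t| = s - t from abs_of_nonneg (by linarith), dist_comm (τ p q s)]
      linarith
  · intro p q p' q' t ht
    rw [hτ, hτ]
    have ht' : (1:ℝ) - t ∈ Set.Icc (0:ℝ) 1 := ⟨by linarith [ht.2], by linarith [ht.1]⟩
    have c1 := hcon p q p' q' t ht
    have c2 := hcon q p q' p' (1 - t) ht'
    have := hlip (σ p q t) (σ q p (1 - t)) (σ p' q' t) (σ q' p' (1 - t))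
    rw [dist_comm q q', dist_comm p p'] at c2
    rw [dist_comm p' p, dist_comm q' q] at c2
    nlinarith [c1, c2, this]
  · intro p q t _
    rw [hτ, hτ, hsymm]
    ring_nf
end

section
/- Let (V, ‖·‖) be a normed real vector space and p ∈ V a point that is an extreme point of the closed ball B(0, ‖p‖). Then for every t ∈ [0,1], the set M^(t)(p, −p) := { z ∈ V : ‖z − p‖ = t·‖p − (−p)‖ and ‖z − (−p)‖ = (1−t)·‖p − (−p)‖ } equals the singleton { (1−2t)·p }. -/
/-! For `z ∈ M^(t)(p, -p)` the halves `u = (p - z)/2` and `v = (p + z)/2` satisfy `u + v = p`,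
`‖u‖ = t‖p‖` and `‖v‖ = (1 - t)‖p‖`. For `0 < t < 1` this exhibits `p` as the convex combination
`t • (t⁻¹ • u) + (1 - t) • ((1 - t)⁻¹ • v)` of two points of the ball, so extremality forces
`u = t • p`, that is `z = (1 - 2t) • p`. -/

open Set Metric

section ExtremePointOfBall

variable {V : Type*} [NormedAddCommGroup V] [NormedSpace ℝ V]

theorem eq_smul_of_add_eq_mem_extremePoints_closedBall {p u v : V} {r t : ℝ}
    (hp : p ∈ extremePoints ℝ (closedBall (0 : V) r)) (ht : t ∈ Icc (0 : ℝ) 1)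
    (huv : u + v = p) (hu : ‖u‖ ≤ t * r) (hv : ‖v‖ ≤ (1 - t) * r) : u = t • p := by
  obtain ⟨ht0, ht1⟩ := ht
  rcases ht0.eq_or_lt with rfl | ht0
  · simpa using hu
  rcases ht1.eq_or_lt with rfl | ht1
  · have hv0 : v = 0 := norm_le_zero_iff.mp (by simpa using hv)
    simpa [hv0] using huv
  have hmem : ∀ {s : ℝ} {w : V}, 0 < s → ‖w‖ ≤ s * r → s⁻¹ • w ∈ closedBall (0 : V) r := by
    intro s w hs hw
    rw [mem_closedBall_zero_iff, norm_smul, Real.norm_of_nonneg (inv_nonneg.mpr hs.le),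
      inv_mul_le_iff₀ hs]
    exact hw
  have hseg : p ∈ openSegment ℝ (t⁻¹ • u) ((1 - t)⁻¹ • v) := by
    refine ⟨t, 1 - t, ht0, sub_pos.mpr ht1, by ring, ?_⟩
    rw [smul_inv_smul₀ ht0.ne', smul_inv_smul₀ (sub_pos.mpr ht1).ne', huv]
  have hu_eq : t⁻¹ • u = p :=
    (mem_extremePoints.mp hp).2 _ (hmem ht0 hu) _ (hmem (sub_pos.mpr ht1) hv) hseg |>.1
  rw [← hu_eq, smul_inv_smul₀ ht0.ne']

theorem norm_sub_neg_self (p : V) : ‖p - -p‖ = 2 * ‖p‖ := by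
  rw [sub_neg_eq_add, ← two_smul ℝ p, norm_smul, Real.norm_two]

end ExtremePointOfBall

/-- If `p` is an extreme point of the closed ball of radius `‖p‖`, then
`M^(t)(p, -p)` is the singleton `{(1-2t) • p}`. -/
theorem Mt_singleton_of_extremePoint
    {V : Type*} [NormedAddCommGroup V] [NormedSpace ℝ V] (p : V)
    (hp : p ∈ Set.extremePoints ℝ (Metric.closedBall (0:V) ‖p‖)) :
    ∀ t ∈ Set.Icc (0:ℝ) 1,
      {z : V | ‖z - p‖ = t * ‖p - (-p)‖ ∧ ‖z - (-p)‖ = (1 - t) * ‖p - (-p)‖}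
        = {(1 - 2*t) • p} := by
  intro t ht
  ext z
  simp only [mem_ofPred_eq, mem_singleton_iff, norm_sub_neg_self]
  constructor
  · rintro ⟨hzp, hzq⟩
    have half_norm : ∀ w : V, ‖(2 : ℝ)⁻¹ • w‖ = ‖w‖ / 2 := fun w => by
      rw [norm_smul, norm_inv, Real.norm_two, inv_mul_eq_div]
    have key : (2 : ℝ)⁻¹ • (p - z) = t • p :=
      eq_smul_of_add_eq_mem_extremePoints_closedBall hp ht (v := (2 : ℝ)⁻¹ • (p + z))
        (by module)
        (by rw [half_norm, norm_sub_rev, hzp]; linarith)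
        (by rw [half_norm, add_comm, ← sub_neg_eq_add, hzq]; linarith)
    calc z = p - (2 : ℝ) • (2 : ℝ)⁻¹ • (p - z) := by module
      _ = (1 - 2 * t) • p := by rw [key]; module
  · rintro rfl
    obtain ⟨ht0, ht1⟩ := ht
    constructor
    · rw [show (1 - 2 * t) • p - p = (2 * t) • -p by module, norm_smul, norm_neg,
        Real.norm_of_nonneg (by linarith)]
      ring
    · rw [show (1 - 2 * t) • p - -p = (2 * (1 - t)) • p by module, norm_smul,
        Real.norm_of_nonneg (by linarith)]
      ring
end

section
/- Let (V, ‖·‖) be a normed vector space, p ∈ V a point, and t ∈ (0,1]. Then (1/(2t))·(p − M^(t)(p,−p)) = S(0,‖p‖) ∩ ((1/t)·p − ((1−t)/t)·S(0,‖p‖)), where S(0,r) denotes the sphere of radius r about the origin, M^(t)(p,−p) := { z : ‖z−p‖ = 2t‖p‖, ‖z+p‖ = 2(1−t)‖p‖ }, and the set operations are pointwise (image under z ↦ (1/(2t))(p − z)). -/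
/-- The rescaled set `(1/(2t)) • (p - M^(t)(p,-p))` equals
`S(0,‖p‖) ∩ ((1/t) • p - ((1-t)/t) • S(0,‖p‖))`. -/
theorem rescaled_Mt_eq_sphere_inter
    {V : Type*} [NormedAddCommGroup V] [NormedSpace ℝ V] (p : V)
    (t : ℝ) (ht : t ∈ Set.Ioc (0:ℝ) 1) :
    (fun z : V => (1/(2*t)) • (p - z)) ''
        {z : V | ‖z - p‖ = 2*t*‖p‖ ∧ ‖z + p‖ = 2*(1 - t)*‖p‖}
      = Metric.sphere (0:V) ‖p‖ ∩
        ((fun w : V => (1/t) • p - ((1 - t)/t) • w) '' Metric.sphere (0:V) ‖p‖) := by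
  obtain ⟨ht0, ht1⟩ := ht
  have ht0' : t ≠ 0 := ne_of_gt ht0
  ext w
  simp only [Set.mem_image, Set.mem_inter_iff, Metric.mem_sphere, dist_zero_right,
    Set.mem_setOf_eq]
  constructor
  · rintro ⟨z, ⟨h1, h2⟩, rfl⟩
    have hw : ‖(1/(2*t)) • (p - z)‖ = ‖p‖ := by
      rw [norm_smul, norm_sub_rev, h1, Real.norm_eq_abs, abs_of_pos (by positivity)]
      field_simp
    refine ⟨hw, ?_⟩
    rcases eq_or_lt_of_le ht1 with hteq | htlt
    · -- t = 1 : z = -p, w = p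
      have hz : z = -p := eq_neg_of_add_eq_zero_left
        (norm_eq_zero.mp (by rw [h2, ← hteq]; ring))
      subst hteq; subst hz
      exact ⟨p, rfl, by norm_num; module⟩
    · have h1tpos : (0:ℝ) < 1 - t := by linarith
      have h1t : (1:ℝ) - t ≠ 0 := ne_of_gt h1tpos
      refine ⟨(1/(2*(1-t))) • (p + z), ?_, ?_⟩
      · rw [norm_smul, add_comm p z, h2, Real.norm_eq_abs, abs_of_pos (by positivity)]
        field_simp
      · match_scalars <;> field_simp <;> ring
  · rintro ⟨hw, u, hu, rfl⟩
    set w' := (1/t) • p - ((1 - t)/t) • u with hw'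
    refine ⟨p - (2*t) • w', ⟨?_, ?_⟩, ?_⟩
    · rw [sub_sub_cancel_left, norm_neg, norm_smul, hw, Real.norm_eq_abs,
        abs_of_pos (by positivity)]
    · have : p - (2*t) • w' + p = (2*(1-t)) • u := by
        rw [hw']; match_scalars <;> field_simp <;> ring
      rw [this, norm_smul, hu, Real.norm_eq_abs, abs_of_nonneg (by linarith)]
    · rw [sub_sub_cancel]
      match_scalars <;> field_simp <;> ring
end

section
/- Let (V, ‖·‖) be a normed vector space and A ⊆ V a subset with a conical geodesic bicombing σ. Let p ∈ A with −p ∈ A, and suppose z ∈ V is such that p − 2z ∈ A and 2z − p ∈ A, and that σ(p, p−2z, t) = (1−t)p + t(p−2z) and σ(2z−p, −p, t) = (1−t)(2z−p) + t(−p) for all t ∈ [0,1]. Then for every t ∈ [0,1], σ(p, −p, t) ∈ (1−2t)z + M^(t)(p − z, z − p), where M^(t)(u,v) := { w : ‖w−u‖ = t‖u−v‖, ‖w−v‖ = (1−t)‖u−v‖ }. -/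
/-- Key lemma: if the bicombing is linear on two auxiliary segments, then
`σ(p,-p,t)` lies in a translated set `M^(t)(p-z, z-p)`. -/
theorem bicombing_mem_translated_Mt
    {V : Type*} [NormedAddCommGroup V] [NormedSpace ℝ V] (A : Set V)
    (σ : V → V → ℝ → V)
    (hmem : ∀ p ∈ A, ∀ q ∈ A, ∀ t ∈ Set.Icc (0:ℝ) 1, σ p q t ∈ A)
    (h0 : ∀ p ∈ A, ∀ q ∈ A, σ p q 0 = p)
    (h1 : ∀ p ∈ A, ∀ q ∈ A, σ p q 1 = q)
    (hgeo : ∀ p ∈ A, ∀ q ∈ A, ∀ s ∈ Set.Icc (0:ℝ) 1, ∀ t ∈ Set.Icc (0:ℝ) 1,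
      ‖σ p q s - σ p q t‖ = |s - t| * ‖p - q‖)
    (hcon : ∀ p ∈ A, ∀ q ∈ A, ∀ p' ∈ A, ∀ q' ∈ A, ∀ t ∈ Set.Icc (0:ℝ) 1,
      ‖σ p q t - σ p' q' t‖ ≤ (1 - t) * ‖p - p'‖ + t * ‖q - q'‖)
    (p : V) (hpA : p ∈ A) (hnpA : -p ∈ A) (z : V)
    (hz1 : p - 2 • z ∈ A) (hz2 : 2 • z - p ∈ A)
    (hlin1 : ∀ t ∈ Set.Icc (0:ℝ) 1,
      σ p (p - 2 • z) t = (1 - t) • p + t • (p - 2 • z))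
    (hlin2 : ∀ t ∈ Set.Icc (0:ℝ) 1,
      σ (2 • z - p) (-p) t = (1 - t) • (2 • z - p) + t • (-p)) :
    ∀ t ∈ Set.Icc (0:ℝ) 1,
      σ p (-p) t ∈ (fun w => (1 - 2*t) • z + w) ''
        {w : V | ‖w - (p - z)‖ = t * ‖(p - z) - (z - p)‖ ∧
                 ‖w - (z - p)‖ = (1 - t) * ‖(p - z) - (z - p)‖} := by
  intro t ht
  obtain ⟨ht0, ht1⟩ := ht
  have htI : t ∈ Set.Icc (0:ℝ) 1 := ⟨ht0, ht1⟩
  have hAB := hlin1 t htI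
  have hCD := hlin2 t htI
  -- norms helpers
  have hnorm2 : ‖(p - z) - (z - p)‖ = 2 * ‖p - z‖ := by
    have : (p - z) - (z - p) = (2:ℝ) • (p - z) := by module
    rw [this, norm_smul]
    simp
  have key1 : (1 - t) • p + t • (p - 2 • z) = p - (2*t) • z := by module
  have key2 : (1 - t) • (2 • z - p) + t • (-p) = (2 - 2*t) • z - p := by module
  -- distance bounds
  have hd1 : ‖σ p (-p) t - σ p (p - 2 • z) t‖ ≤ t * (2 * ‖p - z‖) := by
    have h := hcon p hpA (-p) hnpA p hpA (p - 2 • z) hz1 t htI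
    have e : -p - (p - 2 • z) = (2:ℝ) • (z - p) := by module
    rw [sub_self, norm_zero, mul_zero, zero_add, e, norm_smul] at h
    simpa [norm_sub_rev z p, mul_comm, mul_assoc, mul_left_comm] using h
  have hd2 : ‖σ (2 • z - p) (-p) t - σ p (-p) t‖ ≤ (1 - t) * (2 * ‖p - z‖) := by
    have h := hcon (2 • z - p) hz2 (-p) hnpA p hpA (-p) hnpA t htI
    have e : (2 • z - p) - p = (2:ℝ) • (z - p) := by module
    rw [sub_self, norm_zero, mul_zero, add_zero, e, norm_smul] at h
    simpa [norm_sub_rev z p, mul_comm, mul_assoc, mul_left_comm] using h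
  have hsum : 2 * ‖p - z‖ ≤ ‖σ p (-p) t - σ p (p - 2 • z) t‖ +
      ‖σ (2 • z - p) (-p) t - σ p (-p) t‖ := by
    have tri := norm_sub_le_norm_sub_add_norm_sub (σ (2 • z - p) (-p) t)
      (σ p (-p) t) (σ p (p - 2 • z) t)
    have e : ‖σ (2 • z - p) (-p) t - σ p (p - 2 • z) t‖ = 2 * ‖p - z‖ := by
      rw [hAB, hCD, key1, key2]
      have : ((2 - 2*t) • z - p) - (p - (2*t) • z) = (2:ℝ) • (z - p) := by module
      rw [this, norm_smul]
      simp [norm_sub_rev z p]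
    rw [e] at tri
    calc 2 * ‖p - z‖ ≤ ‖σ (2 • z - p) (-p) t - σ p (-p) t‖ +
          ‖σ p (-p) t - σ p (p - 2 • z) t‖ := tri
      _ = _ := by ring
  have heq1 : ‖σ p (-p) t - σ p (p - 2 • z) t‖ = t * (2 * ‖p - z‖) := by linarith
  have heq2 : ‖σ (2 • z - p) (-p) t - σ p (-p) t‖ = (1 - t) * (2 * ‖p - z‖) := by linarith
  refine ⟨σ p (-p) t - (1 - 2*t) • z, ⟨?_, ?_⟩, by module⟩
  · have e : σ p (-p) t - (1 - 2*t) • z - (p - z) = σ p (-p) t - (p - (2*t) • z) := by module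
    rw [e, ← key1, ← hAB, heq1, hnorm2]
  · have e : σ p (-p) t - (1 - 2*t) • z - (z - p) = -(σ (2 • z - p) (-p) t - σ p (-p) t) := by
      rw [hCD, key2]; module
    rw [e, norm_neg, heq2, hnorm2]
end

section
/- Let (V, ‖·‖) be a normed vector space, A ⊆ V with a conical geodesic bicombing σ, and p, q ∈ A. Suppose there are extreme points e₁,…,e_n of the closed unit ball B(0,1) and λ₁,…,λ_n ∈ [0,1] with Σλ_k = 1 such that (p−q)/2 = (‖p−q‖/2)·Σ λ_k e_k and the set (p+q)/2 + (‖p−q‖/2)·{ Σ_k (−1)^{ε_k} λ_k e_k : (ε₁,…,ε_n) ∈ {0,1}^n } is contained in A. Then σ(p,q,t) = (1−t)p + tq for all t ∈ [0,1]. -/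
/-!
Put `x S = p - ‖p - q‖ • ∑ k ∈ S, lam k • e k` for `S ⊆ Fin n`. These are exactly the
sign-flipped points of the hypothesis, `x ∅ = p`, `x univ = q`, and adding an index `j` to `S`
moves `x S` by `‖p - q‖ lam j • e j`. By induction on `T \ S`, `σ` is linear from `x S` to
`x T` whenever `S ⊆ T`: conicality places `σ (x S) (x T) t` in two closed balls, centred on
the linear geodesics from `x S` to `x (T \ {j})` and from `x (S ∪ {j})` to `x T`, whose only
common point is `(1 - t) • x S + t • x T`, because `e j` is an extreme point of the unit ball.
-/

open Finset Metric

theorem Finset.sum_ite_mem_neg_one_smul {ι R M : Type*} [Fintype ι] [DecidableEq ι] [CommRing R]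
    [AddCommGroup M] [Module R M] (S : Finset ι) (f : ι → M) :
    ∑ k, (if k ∈ S then (-1 : R) else 1) • f k = ∑ k, f k - (2 : R) • ∑ k ∈ S, f k := by
  have hsplit : ∀ k, (if k ∈ S then (-1 : R) else 1) • f k
      = f k - if k ∈ S then (2 : R) • f k else 0 := fun k => by split_ifs <;> module
  simp only [hsplit, sum_sub_distrib, sum_ite_mem, univ_inter, smul_sum]

section

variable {V : Type*} [NormedAddCommGroup V] [NormedSpace ℝ V]

theorem norm_inv_smul_le_one {c : ℝ} (hc : 0 < c) {v : V} (hv : ‖v‖ ≤ c) : ‖c⁻¹ • v‖ ≤ 1 := by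
  rw [norm_smul, Real.norm_of_nonneg (inv_nonneg.2 hc.le)]
  exact inv_mul_le_one_of_le₀ hv hc.le

theorem eq_zero_of_mem_extremePoints_of_norm_smul_sub_le {e y : V} {s r : ℝ}
    (he : e ∈ Set.extremePoints ℝ (closedBall (0 : V) 1)) (hs : 0 < s) (hr : 0 < r)
    (hs_le : ‖s • e - y‖ ≤ s) (hr_le : ‖r • e + y‖ ≤ r) : y = 0 := by
  have hC : e - s⁻¹ • y ∈ closedBall (0 : V) 1 := by
    rw [mem_closedBall_zero_iff, ← inv_smul_smul₀ hs.ne' e, ← smul_sub]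
    exact norm_inv_smul_le_one hs hs_le
  have hD : e + r⁻¹ • y ∈ closedBall (0 : V) 1 := by
    rw [mem_closedBall_zero_iff, ← inv_smul_smul₀ hr.ne' e, ← smul_add]
    exact norm_inv_smul_le_one hr hr_le
  have hseg : e ∈ openSegment ℝ (e - s⁻¹ • y) (e + r⁻¹ • y) := by
    refine ⟨s / (s + r), r / (s + r), by positivity, by positivity, by field_simp, ?_⟩
    match_scalars <;> field_simp
    ring
  simpa [hs.ne'] using he.2 hC hD hseg

structure IsConicalGeodesicBicombing (A : Set V) (σ : V → V → ℝ → V) : Prop where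
  apply_zero : ∀ p ∈ A, ∀ q ∈ A, σ p q 0 = p
  apply_one : ∀ p ∈ A, ∀ q ∈ A, σ p q 1 = q
  geodesic : ∀ p ∈ A, ∀ q ∈ A, ∀ s ∈ Set.Icc (0:ℝ) 1, ∀ t ∈ Set.Icc (0:ℝ) 1,
    ‖σ p q s - σ p q t‖ = |s - t| * ‖p - q‖
  conical : ∀ p ∈ A, ∀ q ∈ A, ∀ p' ∈ A, ∀ q' ∈ A, ∀ t ∈ Set.Icc (0:ℝ) 1,
    ‖σ p q t - σ p' q' t‖ ≤ (1 - t) * ‖p - p'‖ + t * ‖q - q'‖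

def IsLinearBetween (σ : V → V → ℝ → V) (p q : V) : Prop :=
  ∀ t ∈ Set.Icc (0:ℝ) 1, σ p q t = (1 - t) • p + t • q

namespace IsConicalGeodesicBicombing

variable {A : Set V} {σ : V → V → ℝ → V}

theorem isLinearBetween_self (hσ : IsConicalGeodesicBicombing A σ) {a : V} (ha : a ∈ A) :
    IsLinearBetween σ a a := by
  intro t ht
  have h := hσ.geodesic a ha a ha t ht 0 (Set.left_mem_Icc.2 zero_le_one)
  rw [hσ.apply_zero a ha a ha, sub_self, norm_zero, mul_zero, norm_eq_zero, sub_eq_zero] at h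
  rw [h]
  module

theorem isLinearBetween_of_translate (hσ : IsConicalGeodesicBicombing A σ) {a b e : V}
    {μ : ℝ} (ha : a ∈ A) (ha' : a - μ • e ∈ A) (hb : b ∈ A) (hb' : b + μ • e ∈ A)
    (he : e ∈ Set.extremePoints ℝ (closedBall (0 : V) 1)) (hμ : 0 ≤ μ)
    (hab' : IsLinearBetween σ a (b + μ • e)) (ha'b : IsLinearBetween σ (a - μ • e) b) :
    IsLinearBetween σ a b := by
  rcases hμ.eq_or_lt with rfl | hμ
  · simpa using ha'b
  intro t ht
  rcases Set.eq_endpoints_or_mem_Ioo_of_mem_Icc ht with rfl | rfl | ⟨ht₀, ht₁⟩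
  · rw [hσ.apply_zero a ha b hb]; module
  · rw [hσ.apply_one a ha b hb]; module
  have hnorm : ‖μ • e‖ ≤ μ := by
    rw [norm_smul, Real.norm_of_nonneg hμ.le]
    exact mul_le_of_le_one_right hμ.le (mem_closedBall_zero_iff.1 he.1)
  refine eq_of_sub_eq_zero (eq_zero_of_mem_extremePoints_of_norm_smul_sub_le he
    (mul_pos ht₀ hμ) (mul_pos (sub_pos.2 ht₁) hμ) ?_ ?_)
  · calc ‖(t * μ) • e - (σ a b t - ((1 - t) • a + t • b))‖
        = ‖σ a (b + μ • e) t - σ a b t‖ := by rw [hab' t ht]; congr 1; module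
      _ ≤ (1 - t) * ‖a - a‖ + t * ‖b + μ • e - b‖ := hσ.conical a ha _ hb' a ha b hb t ht
      _ ≤ t * μ := by
          rw [sub_self, norm_zero, add_sub_cancel_left]
          nlinarith [norm_nonneg (μ • e)]
  · calc ‖((1 - t) * μ) • e + (σ a b t - ((1 - t) • a + t • b))‖
        = ‖σ a b t - σ (a - μ • e) b t‖ := by rw [ha'b t ht]; congr 1; module
      _ ≤ (1 - t) * ‖a - (a - μ • e)‖ + t * ‖b - b‖ := hσ.conical a ha b hb _ ha' b hb t ht
      _ ≤ (1 - t) * μ := by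
          rw [sub_self, norm_zero, sub_sub_cancel]
          nlinarith [norm_nonneg (μ • e)]

theorem isLinearBetween_sub_sum (hσ : IsConicalGeodesicBicombing A σ) {ι : Type*}
    [DecidableEq ι] (a : V) (μ : ι → ℝ) (hμ : ∀ k, 0 ≤ μ k) (e : ι → V)
    (he : ∀ k, e k ∈ Set.extremePoints ℝ (closedBall (0 : V) 1))
    (hA : ∀ S : Finset ι, a - ∑ k ∈ S, μ k • e k ∈ A) (S D : Finset ι) (hSD : Disjoint S D) :
    IsLinearBetween σ (a - ∑ k ∈ S, μ k • e k) (a - ∑ k ∈ S ∪ D, μ k • e k) := by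
  induction D using Finset.induction_on generalizing S with
  | empty => simpa using hσ.isLinearBetween_self (hA S)
  | insert j D hjD ih =>
    rw [disjoint_insert_right] at hSD
    have hjSD : j ∉ S ∪ D := by simp [hSD.1, hjD]
    have hA' : ∀ T : Finset ι, j ∉ T → a - ∑ k ∈ T, μ k • e k - μ j • e j ∈ A := fun T hjT => by
      simpa [sum_insert hjT, sub_add_eq_sub_sub_swap] using hA (insert j T)
    have hS := ih S hSD.2
    have hjS := ih (insert j S) (disjoint_insert_left.2 ⟨hjD, hSD.2⟩)
    rw [insert_union, sum_insert hjSD, sum_insert hSD.1, sub_add_eq_sub_sub_swap,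
      sub_add_eq_sub_sub_swap] at hjS
    rw [union_insert, sum_insert hjSD, sub_add_eq_sub_sub_swap]
    refine hσ.isLinearBetween_of_translate (hA S) (hA' S hSD.1) (hA' _ hjSD) ?_ (he j) (hμ j)
      ?_ hjS <;> rw [sub_add_cancel]
    exacts [hA _, hS]

end IsConicalGeodesicBicombing

end

theorem bicombing_linear_of_extreme_decomposition_general
    {V : Type*} [NormedAddCommGroup V] [NormedSpace ℝ V] (A : Set V)
    (σ : V → V → ℝ → V)
    (h0 : ∀ p ∈ A, ∀ q ∈ A, σ p q 0 = p)
    (h1 : ∀ p ∈ A, ∀ q ∈ A, σ p q 1 = q)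
    (hgeo : ∀ p ∈ A, ∀ q ∈ A, ∀ s ∈ Set.Icc (0:ℝ) 1, ∀ t ∈ Set.Icc (0:ℝ) 1,
      ‖σ p q s - σ p q t‖ = |s - t| * ‖p - q‖)
    (hcon : ∀ p ∈ A, ∀ q ∈ A, ∀ p' ∈ A, ∀ q' ∈ A, ∀ t ∈ Set.Icc (0:ℝ) 1,
      ‖σ p q t - σ p' q' t‖ ≤ (1 - t) * ‖p - p'‖ + t * ‖q - q'‖)
    (p : V) (q : V)
    (n : ℕ) (e : Fin n → V) (lam : Fin n → ℝ)
    (he : ∀ k, e k ∈ Set.extremePoints ℝ (Metric.closedBall (0:V) 1))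
    (hlam : ∀ k, lam k ∈ Set.Icc (0:ℝ) 1)
    (hrep : (1/2 : ℝ) • (p - q) = (‖p - q‖/2) • ∑ k, lam k • e k)
    (hsub : ∀ ε : Fin n → Bool,
      (1/2 : ℝ) • (p + q) +
        (‖p - q‖/2) • ∑ k, (if ε k then (-1:ℝ) else 1) • lam k • e k ∈ A) :
    ∀ t ∈ Set.Icc (0:ℝ) 1, σ p q t = (1 - t) • p + t • q := by
  have hσ : IsConicalGeodesicBicombing A σ := ⟨h0, h1, hgeo, hcon⟩
  have hpq : ∑ k, (‖p - q‖ * lam k) • e k = p - q := by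
    simp_rw [mul_smul, ← smul_sum]
    calc ‖p - q‖ • ∑ k, lam k • e k = (2 : ℝ) • ((‖p - q‖ / 2) • ∑ k, lam k • e k) := by module
      _ = p - q := by rw [← hrep]; module
  have hA : ∀ S : Finset (Fin n), p - ∑ k ∈ S, (‖p - q‖ * lam k) • e k ∈ A := fun S => by
    convert hsub (fun k => decide (k ∈ S)) using 1
    simp only [decide_eq_true_eq, sum_ite_mem_neg_one_smul, mul_smul, ← smul_sum, smul_sub,
      ← hrep]
    module
  have hlin := hσ.isLinearBetween_sub_sum p _ (fun k => mul_nonneg (norm_nonneg _) (hlam k).1)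
    e he hA ∅ univ (disjoint_empty_left _)
  rwa [sum_empty, sub_zero, empty_union, hpq, sub_sub_cancel] at hlin

/-- Theorem 4.1: if `(p-q)/2` is a convex combination of extreme points of the
unit ball scaled by `‖p-q‖/2`, and the corresponding sign-flipped combinations
all lie in `A`, then the bicombing is linear from `p` to `q`. -/
theorem bicombing_linear_of_extreme_decomposition
    {V : Type*} [NormedAddCommGroup V] [NormedSpace ℝ V] (A : Set V)
    (σ : V → V → ℝ → V)
    (hmem : ∀ p ∈ A, ∀ q ∈ A, ∀ t ∈ Set.Icc (0:ℝ) 1, σ p q t ∈ A)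
    (h0 : ∀ p ∈ A, ∀ q ∈ A, σ p q 0 = p)
    (h1 : ∀ p ∈ A, ∀ q ∈ A, σ p q 1 = q)
    (hgeo : ∀ p ∈ A, ∀ q ∈ A, ∀ s ∈ Set.Icc (0:ℝ) 1, ∀ t ∈ Set.Icc (0:ℝ) 1,
      ‖σ p q s - σ p q t‖ = |s - t| * ‖p - q‖)
    (hcon : ∀ p ∈ A, ∀ q ∈ A, ∀ p' ∈ A, ∀ q' ∈ A, ∀ t ∈ Set.Icc (0:ℝ) 1,
      ‖σ p q t - σ p' q' t‖ ≤ (1 - t) * ‖p - p'‖ + t * ‖q - q'‖)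
    (p : V) (hpA : p ∈ A) (q : V) (hqA : q ∈ A)
    (n : ℕ) (hn : 1 ≤ n) (e : Fin n → V) (lam : Fin n → ℝ)
    (he : ∀ k, e k ∈ Set.extremePoints ℝ (Metric.closedBall (0:V) 1))
    (hlam : ∀ k, lam k ∈ Set.Icc (0:ℝ) 1)
    (hsum : ∑ k, lam k = 1)
    (hrep : (1/2 : ℝ) • (p - q) = (‖p - q‖/2) • ∑ k, lam k • e k)
    (hsub : ∀ ε : Fin n → Bool,
      (1/2 : ℝ) • (p + q) +
        (‖p - q‖/2) • ∑ k, (if ε k then (-1:ℝ) else 1) • lam k • e k ∈ A) :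
    ∀ t ∈ Set.Icc (0:ℝ) 1, σ p q t = (1 - t) • p + t • q :=
  bicombing_linear_of_extreme_decomposition_general A σ h0 h1 hgeo hcon p q n e lam he hlam hrep
    hsub
end

section
/- Let V be a normed vector space. The only conical geodesic bicombing on V (with A = V) is the linear one: if σ : V × V × [0,1] → V is a conical geodesic bicombing and the closed unit ball of V is the closed convex hull of its extreme points, then σ(p,q,t) = (1−t)p + tq for all p, q ∈ V, t ∈ [0,1]. -/
/-!
Since `σ a a t = a`, the conical inequality with `p' = q' = a` gives
`‖z - a‖ ≤ (1 - t) ‖p - a‖ + t ‖q - a‖` for `z = σ p q t` and every `a`. Writing `u = p - z`,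
`v = q - z`, `d = (1 - t) u + t v` and rescaling, `‖x‖ ≤ (1 - t) ‖x + ε u‖ + t ‖x + ε v‖` for all
`x` and `ε`; differentiating at `ε = 0` shows that wherever the norm on the plane spanned by `u`
and `d` is differentiable, its derivative in direction `d` vanishes. By Rademacher and Fubini this
holds at almost every point of some line `c u + s d`, so the convex function `s ↦ ‖c u + s d‖` is
minimal at almost every `s`. As it grows like `|s| ‖d‖`, `d = 0`, i.e. `z = (1 - t) p + t q`.
-/

open MeasureTheory Set

lemma Real.exists_gt_of_ae {p : ℝ → Prop} (h : ∀ᵐ s, p s) (M : ℝ) : ∃ s, M < s ∧ p s := by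
  have : (ae (volume.restrict (Ioi M))).NeBot := ae_neBot.2 (by simp)
  exact ((ae_restrict_mem measurableSet_Ioi).and (ae_restrict_of_ae h)).exists

section LineDeriv

variable {E : Type*} [NormedAddCommGroup E] [NormedSpace ℝ E] {f : E → ℝ} {x a b : E}

lemma HasLineDerivAt.convexComb_eq_zero_of_forall_le {fa fb t : ℝ}
    (ha : HasLineDerivAt ℝ f fa x a) (hb : HasLineDerivAt ℝ f fb x b)
    (h : ∀ ε : ℝ, f x ≤ (1 - t) * f (x + ε • a) + t * f (x + ε • b)) :
    (1 - t) * fa + t * fb = 0 := by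
  refine IsLocalMin.hasDerivAt_eq_zero (Filter.Eventually.of_forall fun ε => ?_)
    ((ha.const_mul (1 - t)).add (hb.const_mul t))
  simp only [Pi.add_apply, zero_smul, add_zero, ← add_mul, sub_add_cancel, one_mul]
  exact h ε

lemma ConvexOn.le_add_smul_of_hasLineDerivAt_zero (hf : ConvexOn ℝ univ f)
    (hd : HasLineDerivAt ℝ f 0 x a) (r : ℝ) : f x ≤ f (x + r • a) := by
  have hline : ConvexOn ℝ univ fun r : ℝ => f (x + r • a) := by
    simpa [Function.comp_def, AffineMap.lineMap_apply, add_comm] using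
      hf.comp_affineMap (AffineMap.lineMap x (x + a))
  simpa using hline.isMinOn_of_rightDeriv_eq_zero (by simp)
    (hd.hasDerivWithinAt.derivWithin (uniqueDiffWithinAt_Ioi 0)) (mem_univ r)

end LineDeriv

section NormedSpace

variable {V : Type*} [NormedAddCommGroup V] [NormedSpace ℝ V]

lemma eq_zero_of_ae_norm_add_smul_le {x d : V} (h : ∀ᵐ s : ℝ, ‖x + s • d‖ ≤ ‖x‖) : d = 0 := by
  by_contra hd0
  have hd : 0 < ‖d‖ := norm_pos_iff.2 hd0
  obtain ⟨s, hs, hle⟩ := Real.exists_gt_of_ae h (2 * ‖x‖ / ‖d‖)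
  rw [div_lt_iff₀ hd] at hs
  have hgrow : ‖s • d‖ - ‖x‖ ≤ ‖x + s • d‖ := by
    simpa [add_comm] using norm_sub_norm_le (s • d) (-x)
  rw [norm_smul, Real.norm_eq_abs] at hgrow
  nlinarith [le_abs_self s]

lemma norm_le_convexComb_norm_add_smul {t : ℝ} {u v : V}
    (h : ∀ y : V, ‖y‖ ≤ (1 - t) * ‖y + u‖ + t * ‖y + v‖) (x : V) (ε : ℝ) :
    ‖x‖ ≤ (1 - t) * ‖x + ε • u‖ + t * ‖x + ε • v‖ := by
  rcases eq_or_ne ε 0 with rfl | hε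
  · simp only [zero_smul, add_zero]; linarith
  obtain ⟨y, rfl⟩ : ∃ y, x = ε • y := ⟨ε⁻¹ • x, (smul_inv_smul₀ hε x).symm⟩
  have := mul_le_mul_of_nonneg_left (h y) (abs_nonneg ε)
  simp only [← smul_add, norm_smul, Real.norm_eq_abs]
  linarith

lemma convexComb_eq_zero_of_forall_norm_le {t : ℝ} (ht : t ≠ 0) {u v : V}
    (h : ∀ y : V, ‖y‖ ≤ (1 - t) * ‖y + u‖ + t * ‖y + v‖) :
    (1 - t) • u + t • v = 0 := by
  set d := (1 - t) • u + t • v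
  let L : ℝ × ℝ →L[ℝ] V :=
    (ContinuousLinearMap.fst ℝ ℝ ℝ).smulRight u + (ContinuousLinearMap.snd ℝ ℝ ℝ).smulRight d
  have hL : ∀ p : ℝ × ℝ, L p = p.1 • u + p.2 • d := fun _ => rfl
  have hLu : L (1, 0) = u := by simp [hL]
  have hLv : L (-(t⁻¹ * (1 - t)), t⁻¹) = v := by
    rw [hL, smul_add, smul_smul, smul_smul, inv_mul_cancel₀ ht, one_smul]; module
  have hdir : (1 - t) • ((1 : ℝ), (0 : ℝ)) + t • (-(t⁻¹ * (1 - t)), t⁻¹) = ((0 : ℝ), (1 : ℝ)) := by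
    ext <;> simp [ht]
  have hdiff : ∀ᵐ p : ℝ × ℝ, DifferentiableAt ℝ (fun p => ‖L p‖) p :=
    (lipschitzWith_one_norm.comp L.lipschitz).ae_differentiableAt
  rw [Measure.volume_eq_prod] at hdiff
  obtain ⟨c, hc⟩ := (Measure.ae_ae_of_ae_prod hdiff).exists
  refine eq_zero_of_ae_norm_add_smul_le (x := c • u) (hc.mono fun s hs => ?_)
  obtain ⟨f', hf⟩ := hs
  have hzero : f' (0, 1) = 0 := by
    rw [← hdir, map_add, map_smul, map_smul]
    refine (hf.hasLineDerivAt _).convexComb_eq_zero_of_forall_le (hf.hasLineDerivAt _) fun ε => ?_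
    simpa only [map_add, map_smul, hLu, hLv] using norm_le_convexComb_norm_add_smul h (L (c, s)) ε
  have := (convexOn_univ_norm.comp_linearMap L.toLinearMap).le_add_smul_of_hasLineDerivAt_zero
    (hzero ▸ hf.hasLineDerivAt (0, 1)) (-s)
  simpa [hL] using this

lemma eq_convexComb_of_forall_norm_sub_le {z p q : V} {t : ℝ}
    (h : ∀ a, ‖z - a‖ ≤ (1 - t) * ‖p - a‖ + t * ‖q - a‖) : z = (1 - t) • p + t • q := by
  rcases eq_or_ne t 0 with rfl | ht
  · simpa [sub_eq_zero] using h p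
  have hcomb := convexComb_eq_zero_of_forall_norm_le ht (u := p - z) (v := q - z) fun y => by
    convert h (z - y) using 4 <;> abel
  linear_combination (norm := module) -hcomb

end NormedSpace

theorem bicombing_linear_on_whole_space_general
    {V : Type*} [NormedAddCommGroup V] [NormedSpace ℝ V]
    (σ : V → V → ℝ → V)
    (h0 : ∀ p q, σ p q 0 = p)
    (hgeo : ∀ p q, ∀ s ∈ Set.Icc (0:ℝ) 1, ∀ t ∈ Set.Icc (0:ℝ) 1,
      ‖σ p q s - σ p q t‖ = |s - t| * ‖p - q‖)
    (hcon : ∀ p q p' q', ∀ t ∈ Set.Icc (0:ℝ) 1,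
      ‖σ p q t - σ p' q' t‖ ≤ (1 - t) * ‖p - p'‖ + t * ‖q - q'‖) :
    ∀ p q : V, ∀ t ∈ Set.Icc (0:ℝ) 1, σ p q t = (1 - t) • p + t • q := by
  intro p q t ht
  have hdiag : ∀ a, σ a a t = a := fun a => by
    simpa [h0, sub_eq_zero] using hgeo a a t ht 0 (left_mem_Icc.2 zero_le_one)
  exact eq_convexComb_of_forall_norm_sub_le fun a => by
    simpa only [hdiag] using hcon p q a a t ht

/-- The only conical geodesic bicombing on a normed vector space whose closed
unit ball is the closed convex hull of its extreme points is the linear one. -/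
theorem bicombing_linear_on_whole_space
    {V : Type*} [NormedAddCommGroup V] [NormedSpace ℝ V]
    (hV : Metric.closedBall (0:V) 1 =
      closure (convexHull ℝ (Set.extremePoints ℝ (Metric.closedBall (0:V) 1))))
    (σ : V → V → ℝ → V)
    (h0 : ∀ p q, σ p q 0 = p)
    (h1 : ∀ p q, σ p q 1 = q)
    (hgeo : ∀ p q, ∀ s ∈ Set.Icc (0:ℝ) 1, ∀ t ∈ Set.Icc (0:ℝ) 1,
      ‖σ p q s - σ p q t‖ = |s - t| * ‖p - q‖)
    (hcon : ∀ p q p' q', ∀ t ∈ Set.Icc (0:ℝ) 1,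
      ‖σ p q t - σ p' q' t‖ ≤ (1 - t) * ‖p - p'‖ + t * ‖q - q'‖) :
    ∀ p q : V, ∀ t ∈ Set.Icc (0:ℝ) 1, σ p q t = (1 - t) • p + t • q :=
  bicombing_linear_on_whole_space_general σ h0 hgeo hcon
end

section
/- Let E be a Banach space whose closed unit ball is the closed convex hull of its extreme points, and let C ⊆ E be a closed convex subset with non-empty interior. If σ is a consistent conical geodesic bicombing on C, then σ(p,q,t) = (1−t)p + tq for all p, q ∈ C and t ∈ [0,1]. -/
open Metric Set

private lemma extreme_pinch {E : Type*} [NormedAddCommGroup E] [NormedSpace ℝ E]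
    {e d : E} (he : e ∈ Set.extremePoints ℝ (Metric.closedBall (0:E) 1))
    {a b : ℝ} (ha : 0 < a) (hb : 0 < b)
    (h₁ : ‖a • e + d‖ ≤ a) (h₂ : ‖b • e - d‖ ≤ b) : d = 0 := by
  have hx₁ : e + a⁻¹ • d ∈ Metric.closedBall (0:E) 1 := by
    rw [mem_closedBall_zero_iff]
    have h : e + a⁻¹ • d = a⁻¹ • (a • e + d) := by
      rw [smul_add, smul_smul, inv_mul_cancel₀ ha.ne', one_smul]
    rw [h, norm_smul, norm_inv, Real.norm_of_nonneg ha.le]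
    calc a⁻¹ * ‖a • e + d‖ ≤ a⁻¹ * a :=
          mul_le_mul_of_nonneg_left h₁ (inv_nonneg.2 ha.le)
      _ = 1 := inv_mul_cancel₀ ha.ne'
  have hx₂ : e - b⁻¹ • d ∈ Metric.closedBall (0:E) 1 := by
    rw [mem_closedBall_zero_iff]
    have h : e - b⁻¹ • d = b⁻¹ • (b • e - d) := by
      rw [smul_sub, smul_smul, inv_mul_cancel₀ hb.ne', one_smul]
    rw [h, norm_smul, norm_inv, Real.norm_of_nonneg hb.le]
    calc b⁻¹ * ‖b • e - d‖ ≤ b⁻¹ * b :=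
          mul_le_mul_of_nonneg_left h₂ (inv_nonneg.2 hb.le)
      _ = 1 := inv_mul_cancel₀ hb.ne'
  have hab : a + b ≠ 0 := by positivity
  have hseg : e ∈ openSegment ℝ (e + a⁻¹ • d) (e - b⁻¹ • d) := by
    refine ⟨a / (a + b), b / (a + b), by positivity, by positivity, by field_simp, ?_⟩
    match_scalars <;> (field_simp; try ring)
  have hkey := (mem_extremePoints.mp he).2 _ hx₁ _ hx₂ hseg
  have h3 : a⁻¹ • d = 0 := by
    have h4 : e + a⁻¹ • d = e + 0 := by rw [hkey.1]; abel
    exact add_left_cancel h4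
  rcases smul_eq_zero.mp h3 with h | h
  · exact absurd h (inv_ne_zero ha.ne')
  · exact h

private lemma glue_affine {E : Type*} [NormedAddCommGroup E] [NormedSpace ℝ E]
    (g : ℝ → E) {δ : ℝ} (hδ : 0 < δ) (hg0 : g 0 = 0) (hg1 : g 1 = 0)
    (loc : ∀ a b : ℝ, 0 ≤ a → a < b → b ≤ 1 → b - a ≤ δ →
      ∀ x, a ≤ x → x ≤ b → g x = g a + ((x - a) / (b - a)) • (g b - g a)) :
    ∀ x, 0 ≤ x → x ≤ 1 → g x = 0 := by
  set η : ℝ := min δ 1 with hη_def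
  have hη : 0 < η := lt_min hδ one_pos
  have hη1 : η ≤ 1 := min_le_right _ _
  have hηδ : η ≤ δ := min_le_left _ _
  set v : E := η⁻¹ • g η with hv_def
  -- claim: on [0, k*(η/2)] ∩ [0,1], g x = x • v
  have K : ∀ k : ℕ, ∀ x : ℝ, 0 ≤ x → x ≤ 1 → x ≤ (k : ℝ) * (η / 2) → g x = x • v := by
    intro k
    induction k with
    | zero =>
      intro x hx0 _ hxk
      simp only [Nat.cast_zero, zero_mul] at hxk
      have : x = 0 := le_antisymm hxk hx0
      rw [this, hg0, zero_smul]
    | succ k ih =>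
      intro x hx0 hx1 hxk
      by_cases hcase : x ≤ (k : ℝ) * (η / 2)
      · exact ih x hx0 hx1 hcase
      push_neg at hcase
      rcases Nat.eq_zero_or_pos k with hk0 | hkpos
      · -- first window [0, η]
        subst hk0
        have hxη : x ≤ η / 2 := by
          simpa using hxk
        have hform := loc 0 η le_rfl hη hη1 (by linarith) x hx0 (by linarith)
        rw [hg0] at hform
        rw [hform]
        simp only [sub_zero, zero_add]
        rw [hv_def, smul_smul, div_eq_mul_inv]
      · -- window [a, b] with a = (k-1)*(η/2), b = min ((k+1)*(η/2)) 1
        have hk1 : (1 : ℝ) ≤ (k : ℝ) := by exact_mod_cast hkpos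
        set a : ℝ := ((k : ℝ) - 1) * (η / 2) with ha_def
        set m : ℝ := (k : ℝ) * (η / 2) with hm_def
        set b : ℝ := min (((k : ℝ) + 1) * (η / 2)) 1 with hb_def
        have ha0 : 0 ≤ a := by
          apply mul_nonneg (by linarith) (by linarith)
        have ham : a < m := by
          rw [ha_def, hm_def]
          have : (k : ℝ) - 1 < k := by linarith
          exact mul_lt_mul_of_pos_right this (by linarith)
        have hmx : m < x := hcase
        have hxb : x ≤ b := by
          rw [hb_def]
          refine le_min ?_ hx1
          simpa [Nat.cast_add, Nat.cast_one] using hxk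
        have hab : a < b := lt_of_lt_of_le (lt_trans ham hmx) hxb
        have hb1 : b ≤ 1 := min_le_right _ _
        have hba : b - a ≤ δ := by
          have : b ≤ ((k : ℝ) + 1) * (η / 2) := min_le_left _ _
          have h2 : ((k : ℝ) + 1) * (η / 2) - a = η := by rw [ha_def]; ring
          linarith
        have hmb : m ≤ b := le_of_lt (lt_of_lt_of_le hmx hxb)
        have hm1 : m ≤ 1 := le_trans hmb hb1
        have ha1 : a ≤ 1 := le_trans (le_of_lt hab) hb1
        have hga : g a = a • v := ih a ha0 ha1 (by rw [ha_def, hm_def]; nlinarith)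
        have hgm : g m = m • v := ih m (by positivity) hm1 le_rfl
        -- slope extraction
        have hma : m - a ≠ 0 := sub_ne_zero.mpr (ne_of_gt ham)
        have hbane : b - a ≠ 0 := sub_ne_zero.mpr (ne_of_gt hab)
        have hformm := loc a b ha0 hab hb1 hba m (le_of_lt ham) hmb
        have h5 : ((m - a) / (b - a)) • (g b - g a) = (m - a) • v := by
          have h55 : g m - g a = ((m - a) / (b - a)) • (g b - g a) := by
            rw [hformm]; abel
          rw [← h55, hgm, hga, ← sub_smul]
        have hslope : g b - g a = (b - a) • v := by
          have h7 := congrArg (fun z => ((b - a) / (m - a)) • z) h5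
          simp only [smul_smul] at h7
          have e1 : (b - a) / (m - a) * ((m - a) / (b - a)) = 1 := by
            field_simp
          have e2 : (b - a) / (m - a) * (m - a) = b - a := by
            field_simp
          rw [e1, e2, one_smul] at h7
          exact h7
        have hformx := loc a b ha0 hab hb1 hba x (le_of_lt (lt_trans ham hmx)) hxb
        have e3 : (x - a) / (b - a) * (b - a) = x - a := div_mul_cancel₀ _ hbane
        rw [hformx, hslope, smul_smul, e3, hga, ← add_smul]
        have e4 : a + (x - a) = x := by ring
        rw [e4]
  -- finish
  obtain ⟨k, hk⟩ := exists_nat_ge (2 / η)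
  have hcov : ∀ x : ℝ, 0 ≤ x → x ≤ 1 → g x = x • v := by
    intro x hx0 hx1
    refine K k x hx0 hx1 ?_
    have : (2 / η) * (η / 2) ≤ (k : ℝ) * (η / 2) :=
      mul_le_mul_of_nonneg_right hk (by positivity)
    have h8 : (2 / η) * (η / 2) = 1 := by field_simp
    linarith
  have hv0 : v = 0 := by
    have := hcov 1 zero_le_one le_rfl
    rw [hg1, one_smul] at this
    exact this.symm
  intro x hx0 hx1
  rw [hcov x hx0 hx1, hv0, smul_zero]

set_option maxHeartbeats 2000000 in
/-- Theorem 1.4: on a closed convex subset with non-empty interior of a Banach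
space whose closed unit ball is the closed convex hull of its extreme points,
every consistent conical geodesic bicombing is linear. -/
theorem consistent_bicombing_linear_on_convex_body
    {E : Type*} [NormedAddCommGroup E] [NormedSpace ℝ E] [CompleteSpace E]
    (hE : Metric.closedBall (0:E) 1 =
      closure (convexHull ℝ (Set.extremePoints ℝ (Metric.closedBall (0:E) 1))))
    (C : Set E) (hC : IsClosed C) (hCconv : Convex ℝ C)
    (hCint : (interior C).Nonempty)
    (σ : E → E → ℝ → E)
    (hmem : ∀ p ∈ C, ∀ q ∈ C, ∀ t ∈ Set.Icc (0:ℝ) 1, σ p q t ∈ C)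
    (h0 : ∀ p ∈ C, ∀ q ∈ C, σ p q 0 = p)
    (h1 : ∀ p ∈ C, ∀ q ∈ C, σ p q 1 = q)
    (hgeo : ∀ p ∈ C, ∀ q ∈ C, ∀ s ∈ Set.Icc (0:ℝ) 1, ∀ t ∈ Set.Icc (0:ℝ) 1,
      ‖σ p q s - σ p q t‖ = |s - t| * ‖p - q‖)
    (hcon : ∀ p ∈ C, ∀ q ∈ C, ∀ p' ∈ C, ∀ q' ∈ C, ∀ t ∈ Set.Icc (0:ℝ) 1,
      ‖σ p q t - σ p' q' t‖ ≤ (1 - t) * ‖p - p'‖ + t * ‖q - q'‖)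
    (hcons : ∀ p ∈ C, ∀ q ∈ C, ∀ s t u : ℝ, 0 ≤ s → s ≤ t → t ≤ 1 →
      u ∈ Set.Icc (0:ℝ) 1 →
      σ (σ p q s) (σ p q t) u = σ p q ((1 - u) * s + u * t)) :
    ∀ p ∈ C, ∀ q ∈ C, ∀ t ∈ Set.Icc (0:ℝ) 1,
      σ p q t = (1 - t) • p + t • q := by
  classical
  have hIcc0 : (0:ℝ) ∈ Set.Icc (0:ℝ) 1 := ⟨le_rfl, zero_le_one⟩
  -- geodesics with equal endpoints are constant
  have hself : ∀ x ∈ C, ∀ t ∈ Set.Icc (0:ℝ) 1, σ x x t = x := by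
    intro x hx t ht
    have h := hgeo x hx x hx t ht 0 hIcc0
    rw [sub_self, norm_zero, mul_zero] at h
    have h2 : σ x x t = σ x x 0 := sub_eq_zero.mp (norm_eq_zero.mp h)
    rw [h2, h0 x hx x hx]
  -- Step 1 : geodesics along nonnegative combinations of extreme directions are straight
  have hbox : ∀ (tf : Finset E), ∀ (μ : E → ℝ),
      (∀ i ∈ tf, 0 ≤ μ i) →
      (∀ i ∈ tf, i ∈ Set.extremePoints ℝ (Metric.closedBall (0:E) 1)) →
      ∀ p : E, (∀ A ⊆ tf, p + ∑ i ∈ A, μ i • i ∈ C) →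
      ∀ s ∈ Set.Icc (0:ℝ) 1,
        σ p (p + ∑ i ∈ tf, μ i • i) s = p + s • ∑ i ∈ tf, μ i • i := by
    intro tf
    induction tf using Finset.induction_on with
    | empty =>
      intro μ hμ hext p hcorner s hs
      simp only [Finset.sum_empty, add_zero, smul_zero]
      exact hself p (by simpa using hcorner ∅ (by simp)) s hs
    | @insert a t' hat ih =>
      intro μ hμ hext p hcorner s hs
      have hμ' : ∀ i ∈ t', 0 ≤ μ i := fun i hi => hμ i (Finset.mem_insert_of_mem hi)
      have hext' : ∀ i ∈ t', i ∈ Set.extremePoints ℝ (Metric.closedBall (0:E) 1) :=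
        fun i hi => hext i (Finset.mem_insert_of_mem hi)
      have hexta := hext a (Finset.mem_insert_self a t')
      have hsum : ∑ i ∈ insert a t', μ i • i = μ a • a + ∑ i ∈ t', μ i • i :=
        Finset.sum_insert hat
      set u : E := μ a • a with hu
      set w : E := ∑ i ∈ t', μ i • i with hw
      have hpC : p ∈ C := by simpa using hcorner ∅ (by simp)
      have hqC : p + (u + w) ∈ C := by
        have h := hcorner (insert a t') subset_rfl
        rwa [hsum] at h
      have hpwC : p + w ∈ C := hcorner t' (Finset.subset_insert a t')
      have hpuC : p + u ∈ C := by
        have h := hcorner {a} (by simp)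
        simpa [Finset.sum_singleton] using h
      have hpuwC : (p + u) + w ∈ C := by rw [add_assoc]; exact hqC
      have IH1 : ∀ s' ∈ Set.Icc (0:ℝ) 1, σ p (p + w) s' = p + s' • w :=
        ih μ hμ' hext' p (fun A hA => hcorner A (hA.trans (Finset.subset_insert a t')))
      have IH2 : ∀ s' ∈ Set.Icc (0:ℝ) 1,
          σ (p + u) ((p + u) + w) s' = (p + u) + s' • w := by
        refine ih μ hμ' hext' (p + u) ?_
        intro A hA
        have hAa : a ∉ A := fun h => hat (hA h)
        have h := hcorner (insert a A) (Finset.insert_subset_insert a hA)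
        rwa [Finset.sum_insert hAa, ← add_assoc] at h
      rw [hsum]
      rcases eq_or_lt_of_le (hμ a (Finset.mem_insert_self a t')) with hμa0 | hμapos
      · have hu0 : u = 0 := by rw [hu, ← hμa0, zero_smul]
        rw [hu0, zero_add]
        exact IH1 s hs
      rcases eq_or_lt_of_le hs.1 with hs0 | hspos
      · rw [← hs0, zero_smul, add_zero]
        exact h0 p hpC _ hqC
      rcases eq_or_lt_of_le hs.2 with hs1 | hslt1
      · rw [hs1, one_smul]
        exact h1 p hpC _ hqC
      -- the pinch
      have hea : ‖a‖ ≤ 1 := mem_closedBall_zero_iff.mp (mem_extremePoints.mp hexta).1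
      have hnu : ‖u‖ ≤ μ a := by
        rw [hu, norm_smul, Real.norm_of_nonneg hμapos.le]
        calc μ a * ‖a‖ ≤ μ a * 1 := mul_le_mul_of_nonneg_left hea hμapos.le
          _ = μ a := mul_one _
      set d : E := σ p (p + (u + w)) s - (p + s • (u + w)) with hd
      have hineq1 : ‖(s * μ a) • a + d‖ ≤ s * μ a := by
        have hb1' := hcon p hpC (p + (u + w)) hqC p hpC (p + w) hpwC s hs
        rw [sub_self, norm_zero, mul_zero, zero_add, IH1 s hs] at hb1'
        have hqpw : (p + (u + w)) - (p + w) = u := by abel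
        rw [hqpw] at hb1'
        have hL1 : σ p (p + (u + w)) s - (p + s • w) = (s * μ a) • a + d := by
          rw [hd, hu]; module
        rw [← hL1]
        calc ‖σ p (p + (u + w)) s - (p + s • w)‖ ≤ s * ‖u‖ := hb1'
          _ ≤ s * μ a := mul_le_mul_of_nonneg_left hnu hspos.le
      have hineq2 : ‖((1 - s) * μ a) • a - d‖ ≤ (1 - s) * μ a := by
        have hd1' := hcon p hpC (p + (u + w)) hqC (p + u) hpuC ((p + u) + w) hpuwC s hs
        have hq' : (p + (u + w)) - ((p + u) + w) = 0 := by abel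
        rw [hq', norm_zero, mul_zero, add_zero, IH2 s hs] at hd1'
        have hppu : p - (p + u) = -u := by abel
        rw [hppu, norm_neg] at hd1'
        have hL2 : σ p (p + (u + w)) s - ((p + u) + s • w)
            = -(((1 - s) * μ a) • a - d) := by
          rw [hd, hu]; module
        rw [← norm_neg, ← hL2]
        calc ‖σ p (p + (u + w)) s - ((p + u) + s • w)‖ ≤ (1 - s) * ‖u‖ := hd1'
          _ ≤ (1 - s) * μ a := mul_le_mul_of_nonneg_left hnu (by linarith)
      have hd0 : d = 0 :=
        extreme_pinch hexta (mul_pos hspos hμapos)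
          (mul_pos (by linarith) hμapos) hineq1 hineq2
      rw [hd] at hd0
      exact sub_eq_zero.mp hd0
  -- Step 2 : straightness with a large ball around the basepoint
  have hroomball : ∀ p q : E, Metric.closedBall p ‖q - p‖ ⊆ C →
      ∀ t ∈ Set.Icc (0:ℝ) 1, σ p q t = p + t • (q - p) := by
    intro p q hsub t ht
    have hpC : p ∈ C := hsub (Metric.mem_closedBall_self (norm_nonneg _))
    have hqC : q ∈ C := hsub (by rw [Metric.mem_closedBall, dist_eq_norm])
    by_cases hpq : q = p
    · subst hpq
      rw [hself q hpC t ht, sub_self, smul_zero, add_zero]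
    have hL : 0 < ‖q - p‖ := by rw [norm_pos_iff, sub_ne_zero]; exact hpq
    have hkey : ∀ δ : ℝ, 0 < δ → ‖σ p q t - (p + t • (q - p))‖ ≤ δ := by
      intro δ hδ
      have hδ' : 0 < δ / (2 * ‖q - p‖ + 2) := by positivity
      have hmem1 : ‖q - p‖⁻¹ • (q - p) ∈
          closure (convexHull ℝ (Set.extremePoints ℝ (Metric.closedBall (0:E) 1))) := by
        rw [← hE, mem_closedBall_zero_iff, norm_smul, norm_inv, norm_norm,
          inv_mul_cancel₀ hL.ne']
      obtain ⟨z, hz, hzd⟩ := Metric.mem_closure_iff.mp hmem1 _ hδ'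
      rw [convexHull_eq_union_convexHull_finite_subsets] at hz
      simp only [Set.mem_iUnion] at hz
      obtain ⟨tf, htf, hztf⟩ := hz
      obtain ⟨wt, hw0, hw1, hwz⟩ := Finset.mem_convexHull.mp hztf
      rw [Finset.centerMass_eq_of_sum_1 _ _ hw1] at hwz
      have hsumz : ∑ i ∈ tf, (‖q - p‖ * wt i) • i = ‖q - p‖ • z := by
        rw [← hwz, Finset.smul_sum]
        refine Finset.sum_congr rfl fun i hi => ?_
        rw [smul_smul]; rfl
      have hcorner : ∀ A ⊆ tf, p + ∑ i ∈ A, (‖q - p‖ * wt i) • i ∈ C := by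
        intro A hA
        apply hsub
        rw [Metric.mem_closedBall, dist_eq_norm, add_sub_cancel_left]
        calc ‖∑ i ∈ A, (‖q - p‖ * wt i) • i‖ ≤ ∑ i ∈ A, ‖(‖q - p‖ * wt i) • i‖ :=
              norm_sum_le _ _
          _ ≤ ∑ i ∈ A, ‖q - p‖ * wt i := by
              refine Finset.sum_le_sum fun i hi => ?_
              rw [norm_smul, Real.norm_of_nonneg (mul_nonneg hL.le (hw0 i (hA hi)))]
              have hi1 : ‖i‖ ≤ 1 :=
                mem_closedBall_zero_iff.mp (mem_extremePoints.mp (htf (hA hi))).1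
              calc ‖q - p‖ * wt i * ‖i‖ ≤ ‖q - p‖ * wt i * 1 :=
                    mul_le_mul_of_nonneg_left hi1 (mul_nonneg hL.le (hw0 i (hA hi)))
                _ = ‖q - p‖ * wt i := mul_one _
          _ ≤ ∑ i ∈ tf, ‖q - p‖ * wt i :=
              Finset.sum_le_sum_of_subset_of_nonneg hA
                (fun i hi _ => mul_nonneg hL.le (hw0 i hi))
          _ = ‖q - p‖ := by rw [← Finset.mul_sum, hw1, mul_one]
      have hlin := hbox tf (fun i => ‖q - p‖ * wt i)
        (fun i hi => mul_nonneg hL.le (hw0 i hi)) (fun i hi => htf hi) p hcorner t ht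
      rw [hsumz] at hlin
      have hLzC : p + ‖q - p‖ • z ∈ C := by
        have h := hcorner tf subset_rfl
        rwa [hsumz] at h
      have hcone := hcon p hpC q hqC p hpC (p + ‖q - p‖ • z) hLzC t ht
      rw [sub_self, norm_zero, mul_zero, zero_add, hlin] at hcone
      have hqLz : ‖q - (p + ‖q - p‖ • z)‖ < ‖q - p‖ * (δ / (2 * ‖q - p‖ + 2)) := by
        have he1 : q - (p + ‖q - p‖ • z) = ‖q - p‖ • (‖q - p‖⁻¹ • (q - p) - z) := by
          rw [smul_sub, smul_smul, mul_inv_cancel₀ hL.ne', one_smul]; abel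
        rw [he1, norm_smul, norm_norm]
        rw [dist_eq_norm] at hzd
        exact mul_lt_mul_of_pos_left hzd hL
      have htri : ‖σ p q t - (p + t • (q - p))‖
          ≤ ‖σ p q t - (p + t • (‖q - p‖ • z))‖ + ‖t • (‖q - p‖ • z) - t • (q - p)‖ := by
        have he2 : σ p q t - (p + t • (q - p))
            = (σ p q t - (p + t • (‖q - p‖ • z))) + (t • (‖q - p‖ • z) - t • (q - p)) := by
          abel
        rw [he2]; exact norm_add_le _ _
      have hterm2 : ‖t • (‖q - p‖ • z) - t • (q - p)‖ ≤ ‖q - p‖ * (δ / (2 * ‖q - p‖ + 2)) := by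
        rw [← smul_sub, norm_smul, Real.norm_of_nonneg ht.1]
        have hnn : ‖‖q - p‖ • z - (q - p)‖ ≤ ‖q - p‖ * (δ / (2 * ‖q - p‖ + 2)) := by
          rw [← norm_neg]
          have he3 : -(‖q - p‖ • z - (q - p)) = q - (p + ‖q - p‖ • z) := by abel
          rw [he3]
          exact hqLz.le
        calc t * ‖‖q - p‖ • z - (q - p)‖ ≤ 1 * ‖‖q - p‖ • z - (q - p)‖ :=
              mul_le_mul_of_nonneg_right ht.2 (norm_nonneg _)
          _ = ‖‖q - p‖ • z - (q - p)‖ := one_mul _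
          _ ≤ _ := hnn
      have hterm1 : ‖σ p q t - (p + t • (‖q - p‖ • z))‖
          ≤ ‖q - p‖ * (δ / (2 * ‖q - p‖ + 2)) := by
        calc ‖σ p q t - (p + t • (‖q - p‖ • z))‖ ≤ t * ‖q - (p + ‖q - p‖ • z)‖ := hcone
          _ ≤ 1 * ‖q - (p + ‖q - p‖ • z)‖ :=
              mul_le_mul_of_nonneg_right ht.2 (norm_nonneg _)
          _ = ‖q - (p + ‖q - p‖ • z)‖ := one_mul _
          _ ≤ _ := hqLz.le
      have hfinal : 2 * (‖q - p‖ * (δ / (2 * ‖q - p‖ + 2))) ≤ δ := by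
        have h2L : (0:ℝ) < 2 * ‖q - p‖ + 2 := by positivity
        calc 2 * (‖q - p‖ * (δ / (2 * ‖q - p‖ + 2)))
            = (2 * ‖q - p‖) / (2 * ‖q - p‖ + 2) * δ := by ring
          _ ≤ 1 * δ := by
              refine mul_le_mul_of_nonneg_right ?_ hδ.le
              rw [div_le_one h2L]; linarith
          _ = δ := one_mul _
      calc ‖σ p q t - (p + t • (q - p))‖
          ≤ ‖σ p q t - (p + t • (‖q - p‖ • z))‖ + ‖t • (‖q - p‖ • z) - t • (q - p)‖ := htri
        _ ≤ ‖q - p‖ * (δ / (2 * ‖q - p‖ + 2)) + ‖q - p‖ * (δ / (2 * ‖q - p‖ + 2)) :=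
            add_le_add hterm1 hterm2
        _ = 2 * (‖q - p‖ * (δ / (2 * ‖q - p‖ + 2))) := by ring
        _ ≤ δ := hfinal
    have hle0 : ‖σ p q t - (p + t • (q - p))‖ ≤ 0 :=
      le_of_forall_pos_le_add fun ε hε => by simpa using hkey ε hε
    exact sub_eq_zero.mp (norm_le_zero_iff.mp hle0)
  -- Step 3 : straightness when every geodesic point has uniform room
  have hloc : ∀ x ∈ C, ∀ y ∈ C, ∀ ρ : ℝ, 0 < ρ →
      (∀ r ∈ Set.Icc (0:ℝ) 1, Metric.closedBall (σ x y r) ρ ⊆ C) →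
      ∀ t ∈ Set.Icc (0:ℝ) 1, σ x y t = x + t • (y - x) := by
    intro x hx y hy ρ hρ hroom t ht
    have hδ : 0 < ρ / (‖y - x‖ + 1) := by positivity
    have hg0 : σ x y 0 - (x + (0:ℝ) • (y - x)) = 0 := by
      rw [h0 x hx y hy, zero_smul, add_zero, sub_self]
    have hg1 : σ x y 1 - (x + (1:ℝ) • (y - x)) = 0 := by
      rw [h1 x hx y hy, one_smul]; abel
    have loc : ∀ a b : ℝ, 0 ≤ a → a < b → b ≤ 1 → b - a ≤ ρ / (‖y - x‖ + 1) →
        ∀ r, a ≤ r → r ≤ b →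
        σ x y r - (x + r • (y - x)) = (σ x y a - (x + a • (y - x)))
          + ((r - a) / (b - a)) • ((σ x y b - (x + b • (y - x)))
              - (σ x y a - (x + a • (y - x)))) := by
      intro a b ha0 hab hb1 hba r har hrb
      have haI : a ∈ Set.Icc (0:ℝ) 1 := ⟨ha0, le_trans hab.le hb1⟩
      have hbI : b ∈ Set.Icc (0:ℝ) 1 := ⟨le_trans ha0 hab.le, hb1⟩
      have hγa : σ x y a ∈ C := hmem x hx y hy a haI
      have hγb : σ x y b ∈ C := hmem x hx y hy b hbI
      have hchord : ‖σ x y b - σ x y a‖ ≤ ρ := by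
        have h := hgeo x hx y hy b hbI a haI
        rw [abs_of_nonneg (by linarith)] at h
        rw [h]
        have hxy : ‖x - y‖ = ‖y - x‖ := norm_sub_rev _ _
        rw [hxy]
        calc (b - a) * ‖y - x‖ ≤ (ρ / (‖y - x‖ + 1)) * ‖y - x‖ :=
              mul_le_mul_of_nonneg_right hba (norm_nonneg _)
          _ ≤ ρ := by
              rw [div_mul_eq_mul_div, div_le_iff₀ (by positivity)]
              nlinarith [norm_nonneg (y - x), hρ.le]
      have hsubb : Metric.closedBall (σ x y a) ‖σ x y b - σ x y a‖ ⊆ C :=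
        (Metric.closedBall_subset_closedBall hchord).trans (hroom a haI)
      have hbane : b - a ≠ 0 := ne_of_gt (by linarith)
      have huI : (r - a) / (b - a) ∈ Set.Icc (0:ℝ) 1 :=
        ⟨div_nonneg (by linarith) (by linarith),
          by rw [div_le_one (by linarith)]; linarith⟩
      have hstraight := hroomball (σ x y a) (σ x y b) hsubb ((r - a) / (b - a)) huI
      have hcons' := hcons x hx y hy a b ((r - a) / (b - a)) ha0 hab.le hb1 huI
      have hr : (1 - (r - a) / (b - a)) * a + (r - a) / (b - a) * b = r := by
        field_simp; ring
      rw [hr, hstraight] at hcons'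
      rw [← hcons']
      match_scalars <;> (field_simp; try ring)
    have hglue := glue_affine (fun r => σ x y r - (x + r • (y - x))) hδ hg0 hg1 loc
    have := hglue t ht.1 ht.2
    exact sub_eq_zero.mp this
  -- Step 4 : bootstrap from the interior point
  obtain ⟨c, hcint⟩ := hCint
  obtain ⟨ε, hε, hball⟩ : ∃ ε : ℝ, 0 < ε ∧ Metric.closedBall c ε ⊆ C := by
    obtain ⟨ε₀, hε₀, hball₀⟩ := Metric.mem_nhds_iff.mp (mem_interior_iff_mem_nhds.mp hcint)
    exact ⟨ε₀ / 2, by positivity,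
      (Metric.closedBall_subset_ball (by linarith)).trans hball₀⟩
  have hcC : c ∈ C := hball (Metric.mem_closedBall_self hε.le)
  intro p hp q hq t ht
  obtain ⟨D, hDp, hDq, hD0⟩ : ∃ D : ℝ, ‖c - p‖ ≤ D ∧ ‖c - q‖ ≤ D ∧ 0 ≤ D :=
    ⟨max ‖c - p‖ ‖c - q‖, le_max_left _ _, le_max_right _ _,
      le_trans (norm_nonneg _) (le_max_left _ _)⟩
  obtain ⟨κ, hκpos, hκ1, hκεD⟩ : ∃ κ : ℝ, 0 < κ ∧ κ < 1 ∧ κ * (ε + D) ≤ ε / 2 := by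
    refine ⟨ε / (2 * (D + ε)), by positivity, ?_, ?_⟩
    · rw [div_lt_one (by positivity)]; linarith
    · rw [div_mul_eq_mul_div, div_le_div_iff₀ (by positivity) (by norm_num)]
      nlinarith
  -- convex combinations towards c stay in C
  have hPmem : ∀ x ∈ C, ∀ r : ℝ, 0 ≤ r → r ≤ 1 → x + r • (c - x) ∈ C := by
    intro x hx r h0r hr1
    have he : x + r • (c - x) = (1 - r) • x + r • c := by module
    rw [he]; exact hCconv hx hcC (by linarith) h0r (by ring)
  -- points near segments through c have room
  have hsegroom : ∀ y₀ ∈ C, ∀ s : ℝ, 0 < s → s ≤ 1 → ∀ z : E,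
      ‖z - ((1 - s) • y₀ + s • c)‖ ≤ s * ε → z ∈ C := by
    intro y₀ hy₀ s hs0 hs1 z hz
    have he : z = (1 - s) • y₀ + s • (c + s⁻¹ • (z - ((1 - s) • y₀ + s • c))) := by
      rw [smul_add, smul_smul, mul_inv_cancel₀ hs0.ne', one_smul]
      abel
    rw [he]
    refine hCconv hy₀ (hball ?_) (by linarith) hs0.le (by ring)
    rw [Metric.mem_closedBall, dist_eq_norm, add_sub_cancel_left, norm_smul,
      norm_inv, Real.norm_of_nonneg hs0.le]
    calc s⁻¹ * ‖z - ((1 - s) • y₀ + s • c)‖ ≤ s⁻¹ * (s * ε) :=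
          mul_le_mul_of_nonneg_left hz (inv_nonneg.2 hs0.le)
      _ = ε := by field_simp
  -- contraction step
  have key : ∀ s : ℝ, 0 < s → s ≤ 1 →
      (∀ t' ∈ Set.Icc (0:ℝ) 1, σ (p + s • (c - p)) (q + s • (c - q)) t'
          = (p + s • (c - p)) + t' • ((q + s • (c - q)) - (p + s • (c - p)))) →
      (∀ t' ∈ Set.Icc (0:ℝ) 1,
        σ (p + ((1 - κ) * s) • (c - p)) (q + ((1 - κ) * s) • (c - q)) t'
          = (p + ((1 - κ) * s) • (c - p))
            + t' • ((q + ((1 - κ) * s) • (c - q)) - (p + ((1 - κ) * s) • (c - p)))) := by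
    intro s hs0 hs1 hlin
    have hs'0 : 0 < (1 - κ) * s := mul_pos (by linarith) hs0
    have hs'1 : (1 - κ) * s ≤ 1 := by nlinarith
    have hP'C : p + ((1 - κ) * s) • (c - p) ∈ C := hPmem p hp _ hs'0.le hs'1
    have hQ'C : q + ((1 - κ) * s) • (c - q) ∈ C := hPmem q hq _ hs'0.le hs'1
    have hPC : p + s • (c - p) ∈ C := hPmem p hp s hs0.le hs1
    have hQC : q + s • (c - q) ∈ C := hPmem q hq s hs0.le hs1
    have hroom : ∀ r ∈ Set.Icc (0:ℝ) 1,
        Metric.closedBall (σ (p + ((1 - κ) * s) • (c - p)) (q + ((1 - κ) * s) • (c - q)) r)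
          (s * ε * κ) ⊆ C := by
      intro r hr z hz
      rw [Metric.mem_closedBall, dist_eq_norm] at hz
      have hκs : (0:ℝ) ≤ κ * s := by positivity
      have hPP : ‖(p + ((1 - κ) * s) • (c - p)) - (p + s • (c - p))‖ ≤ κ * s * D := by
        have he : (p + ((1 - κ) * s) • (c - p)) - (p + s • (c - p))
            = (-(κ * s)) • (c - p) := by module
        rw [he, norm_smul, Real.norm_eq_abs, abs_neg, abs_of_nonneg hκs]
        exact mul_le_mul_of_nonneg_left hDp hκs
      have hQQ : ‖(q + ((1 - κ) * s) • (c - q)) - (q + s • (c - q))‖ ≤ κ * s * D := by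
        have he : (q + ((1 - κ) * s) • (c - q)) - (q + s • (c - q))
            = (-(κ * s)) • (c - q) := by module
        rw [he, norm_smul, Real.norm_eq_abs, abs_neg, abs_of_nonneg hκs]
        exact mul_le_mul_of_nonneg_left hDq hκs
      have hbound : ‖σ (p + ((1 - κ) * s) • (c - p)) (q + ((1 - κ) * s) • (c - q)) r
          - σ (p + s • (c - p)) (q + s • (c - q)) r‖ ≤ κ * s * D := by
        refine le_trans (hcon _ hP'C _ hQ'C _ hPC _ hQC r hr) ?_
        have hr1 : (0:ℝ) ≤ 1 - r := by linarith [hr.2]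
        have e1 := mul_le_mul_of_nonneg_left hPP hr1
        have e2 := mul_le_mul_of_nonneg_left hQQ hr.1
        nlinarith
      have hy₀ : (1 - r) • p + r • q ∈ C :=
        hCconv hp hq (by linarith [hr.2]) hr.1 (by ring)
      have hform : (p + s • (c - p)) + r • ((q + s • (c - q)) - (p + s • (c - p)))
          = (1 - s) • ((1 - r) • p + r • q) + s • c := by module
      refine hsegroom _ hy₀ s hs0 hs1 z ?_
      have hlast : σ (p + s • (c - p)) (q + s • (c - q)) r
          = (1 - s) • ((1 - r) • p + r • q) + s • c := by
        rw [hlin r hr, hform]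
      have hsplit : z - ((1 - s) • ((1 - r) • p + r • q) + s • c)
          = (z - σ (p + ((1 - κ) * s) • (c - p)) (q + ((1 - κ) * s) • (c - q)) r)
            + (σ (p + ((1 - κ) * s) • (c - p)) (q + ((1 - κ) * s) • (c - q)) r
                - σ (p + s • (c - p)) (q + s • (c - q)) r) := by
        rw [← hlast]; abel
      have htr := norm_add_le
        (z - σ (p + ((1 - κ) * s) • (c - p)) (q + ((1 - κ) * s) • (c - q)) r)
        (σ (p + ((1 - κ) * s) • (c - p)) (q + ((1 - κ) * s) • (c - q)) r
          - σ (p + s • (c - p)) (q + s • (c - q)) r)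
      rw [← hsplit] at htr
      have hεD : s * ε * κ + κ * s * D ≤ s * ε := by nlinarith
      calc ‖z - ((1 - s) • ((1 - r) • p + r • q) + s • c)‖
          ≤ ‖z - σ (p + ((1 - κ) * s) • (c - p)) (q + ((1 - κ) * s) • (c - q)) r‖
            + ‖σ (p + ((1 - κ) * s) • (c - p)) (q + ((1 - κ) * s) • (c - q)) r
                - σ (p + s • (c - p)) (q + s • (c - q)) r‖ := htr
        _ ≤ s * ε * κ + κ * s * D := add_le_add hz hbound
        _ ≤ s * ε := hεD
    exact hloc _ hP'C _ hQ'C (s * ε * κ) (by positivity) hroom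
  -- iterate
  have main : ∀ n : ℕ, ∀ t' ∈ Set.Icc (0:ℝ) 1,
      σ (p + ((1 - κ) ^ n) • (c - p)) (q + ((1 - κ) ^ n) • (c - q)) t'
        = (p + ((1 - κ) ^ n) • (c - p))
          + t' • ((q + ((1 - κ) ^ n) • (c - q)) - (p + ((1 - κ) ^ n) • (c - p))) := by
    intro n
    induction n with
    | zero =>
      intro t' ht'
      simp only [pow_zero, one_smul]
      have hc1 : p + (c - p) = c := by abel
      have hc2 : q + (c - q) = c := by abel
      rw [hc1, hc2, hself c hcC t' ht', sub_self, smul_zero, add_zero]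
    | succ n ihn =>
      have hpow0 : 0 < (1 - κ) ^ n := pow_pos (by linarith) n
      have hpow1 : (1 - κ) ^ n ≤ 1 := pow_le_one₀ (by linarith) (by linarith)
      have hstep := key ((1 - κ) ^ n) hpow0 hpow1 ihn
      intro t' ht'
      have hpow : (1 - κ) ^ (n + 1) = (1 - κ) * (1 - κ) ^ n := by
        rw [pow_succ]; ring
      rw [hpow]
      exact hstep t' ht'
  -- pass to the limit
  have hfin : ∀ n : ℕ, ‖σ p q t - ((1 - t) • p + t • q)‖ ≤ (1 - κ) ^ n * (2 * D) := by
    intro n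
    have hpow0 : 0 < (1 - κ) ^ n := pow_pos (by linarith) n
    have hpow1 : (1 - κ) ^ n ≤ 1 := pow_le_one₀ (by linarith) (by linarith)
    have hPC : p + ((1 - κ) ^ n) • (c - p) ∈ C := hPmem p hp _ hpow0.le hpow1
    have hQC : q + ((1 - κ) ^ n) • (c - q) ∈ C := hPmem q hq _ hpow0.le hpow1
    have hms := main n t ht
    have ht1 : (0:ℝ) ≤ 1 - t := by linarith [ht.2]
    have h1' : ‖σ p q t - σ (p + ((1 - κ) ^ n) • (c - p)) (q + ((1 - κ) ^ n) • (c - q)) t‖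
        ≤ (1 - κ) ^ n * D := by
      refine le_trans (hcon p hp q hq _ hPC _ hQC t ht) ?_
      have hPP : ‖p - (p + ((1 - κ) ^ n) • (c - p))‖ ≤ (1 - κ) ^ n * D := by
        have he : p - (p + ((1 - κ) ^ n) • (c - p)) = (-((1 - κ) ^ n)) • (c - p) := by
          module
        rw [he, norm_smul, Real.norm_eq_abs, abs_neg, abs_of_nonneg hpow0.le]
        exact mul_le_mul_of_nonneg_left hDp hpow0.le
      have hQQ : ‖q - (q + ((1 - κ) ^ n) • (c - q))‖ ≤ (1 - κ) ^ n * D := by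
        have he : q - (q + ((1 - κ) ^ n) • (c - q)) = (-((1 - κ) ^ n)) • (c - q) := by
          module
        rw [he, norm_smul, Real.norm_eq_abs, abs_neg, abs_of_nonneg hpow0.le]
        exact mul_le_mul_of_nonneg_left hDq hpow0.le
      have e1 := mul_le_mul_of_nonneg_left hPP ht1
      have e2 := mul_le_mul_of_nonneg_left hQQ ht.1
      nlinarith
    have h2' : ‖σ (p + ((1 - κ) ^ n) • (c - p)) (q + ((1 - κ) ^ n) • (c - q)) t
        - ((1 - t) • p + t • q)‖ ≤ (1 - κ) ^ n * D := by
      rw [hms]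
      have he : (p + ((1 - κ) ^ n) • (c - p))
          + t • ((q + ((1 - κ) ^ n) • (c - q)) - (p + ((1 - κ) ^ n) • (c - p)))
          - ((1 - t) • p + t • q)
          = ((1 - κ) ^ n) • ((1 - t) • (c - p) + t • (c - q)) := by module
      rw [he, norm_smul, Real.norm_eq_abs, abs_of_nonneg hpow0.le]
      have hcy : ‖(1 - t) • (c - p) + t • (c - q)‖ ≤ D := by
        refine le_trans (norm_add_le _ _) ?_
        rw [norm_smul, norm_smul, Real.norm_eq_abs, Real.norm_eq_abs,
          abs_of_nonneg ht1, abs_of_nonneg ht.1]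
        nlinarith [mul_le_mul_of_nonneg_left hDp ht1, mul_le_mul_of_nonneg_left hDq ht.1]
      exact mul_le_mul_of_nonneg_left hcy hpow0.le
    have hsplit : σ p q t - ((1 - t) • p + t • q)
        = (σ p q t - σ (p + ((1 - κ) ^ n) • (c - p)) (q + ((1 - κ) ^ n) • (c - q)) t)
          + (σ (p + ((1 - κ) ^ n) • (c - p)) (q + ((1 - κ) ^ n) • (c - q)) t
              - ((1 - t) • p + t • q)) := by abel
    have htri := norm_add_le
      (σ p q t - σ (p + ((1 - κ) ^ n) • (c - p)) (q + ((1 - κ) ^ n) • (c - q)) t)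
      (σ (p + ((1 - κ) ^ n) • (c - p)) (q + ((1 - κ) ^ n) • (c - q)) t
        - ((1 - t) • p + t • q))
    rw [← hsplit] at htri
    calc ‖σ p q t - ((1 - t) • p + t • q)‖
        ≤ ‖σ p q t - σ (p + ((1 - κ) ^ n) • (c - p)) (q + ((1 - κ) ^ n) • (c - q)) t‖
          + ‖σ (p + ((1 - κ) ^ n) • (c - p)) (q + ((1 - κ) ^ n) • (c - q)) t
              - ((1 - t) • p + t • q)‖ := htri
      _ ≤ (1 - κ) ^ n * D + (1 - κ) ^ n * D := add_le_add h1' h2'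
      _ = (1 - κ) ^ n * (2 * D) := by ring
  have hle0 : ‖σ p q t - ((1 - t) • p + t • q)‖ ≤ 0 := by
    by_contra hcontra
    push_neg at hcontra
    obtain ⟨n, hn⟩ := exists_pow_lt_of_lt_one
      (show (0:ℝ) < ‖σ p q t - ((1 - t) • p + t • q)‖ / (2 * D + 1) by positivity)
      (show 1 - κ < 1 by linarith)
    have hpow0 : (0:ℝ) ≤ (1 - κ) ^ n := pow_nonneg (by linarith) n
    have hchain : ‖σ p q t - ((1 - t) • p + t • q)‖
        < ‖σ p q t - ((1 - t) • p + t • q)‖ := by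
      calc ‖σ p q t - ((1 - t) • p + t • q)‖ ≤ (1 - κ) ^ n * (2 * D) := hfin n
        _ ≤ (1 - κ) ^ n * (2 * D + 1) := by nlinarith
        _ < (‖σ p q t - ((1 - t) • p + t • q)‖ / (2 * D + 1)) * (2 * D + 1) :=
            mul_lt_mul_of_pos_right hn (by positivity)
        _ = ‖σ p q t - ((1 - t) • p + t • q)‖ := by field_simp
    exact lt_irrefl _ hchain
  exact sub_eq_zero.mp (norm_le_zero_iff.mp hle0)
end
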